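/- arXiv:2011.14219 — 6 statements merged into one kernel-verified Lean document; each statement's English description precedes it below -/
import Mathlib

section
/- Suppose the norm ‖·‖ on ℝ^k satisfies Assumption 1, and let γ ∈ (0,1] and C > 0. Then the functions h₊(x) := C‖(x)_{V+}‖^γ and h₋(x) := −C‖(x)_{V−}‖^γ both belong to the monotone Hölder class Λ₊,V(γ,C); that is, each satisfies |h(x) − h(z)| ≤ C‖x − z‖^γ for all x, z ∈ ℝ^k and is nondecreasing with respect to the coordinates in V. -/
open MeasureTheory Filter Finset

/-- Positive part of a vector relative to coordinate set `V`. -/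
def vplus {k : ℕ} (V : Finset (Fin k)) (z : Fin k → ℝ) : Fin k → ℝ :=
  fun j => if j ∈ V then max (z j) 0 else z j

/-- Negative part of a vector relative to coordinate set `V`. -/
def vminus {k : ℕ} (V : Finset (Fin k)) (z : Fin k → ℝ) : Fin k → ℝ :=
  vplus V (-z)

/-- A norm on `ℝ^k` satisfying Assumption 1 (monotone in the magnitude of each coordinate). -/
structure MonNorm (k : ℕ) where
  N : (Fin k → ℝ) → ℝ
  add_le : ∀ x y, N (x + y) ≤ N x + N y
  smul_eq : ∀ (a : ℝ) (x), N (a • x) = |a| * N x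
  eq_zero_iff : ∀ x, N x = 0 ↔ x = 0
  mono : ∀ z w : Fin k → ℝ, (∀ j, |z j| ≤ |w j|) → N z ≤ N w

/-- Hölder continuity with exponent `γ` and constant `C` w.r.t. the norm `N`. -/
def HolderW {k : ℕ} (N : (Fin k → ℝ) → ℝ) (γ C : ℝ) (f : (Fin k → ℝ) → ℝ) : Prop :=
  ∀ x z : Fin k → ℝ, |f x - f z| ≤ C * N (x - z) ^ γ

/-- Coordinatewise monotonicity w.r.t. the coordinates in `V`. -/
def MonoV {k : ℕ} (V : Finset (Fin k)) (f : (Fin k → ℝ) → ℝ) : Prop :=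
  ∀ x z : Fin k → ℝ, (∀ j ∈ V, z j ≤ x j) → (∀ j ∉ V, x j = z j) → f z ≤ f x

/-- The monotone Hölder class `Λ₊,V(γ,C)`. -/
def Lam {k : ℕ} (V : Finset (Fin k)) (N : (Fin k → ℝ) → ℝ) (γ C : ℝ) :
    Set ((Fin k → ℝ) → ℝ) :=
  {f | HolderW N γ C f ∧ MonoV V f}

lemma MonNorm.nonneg {k : ℕ} (Nm : MonNorm k) (x : Fin k → ℝ) : 0 ≤ Nm.N x := by
  have h0 : Nm.N 0 = 0 := (Nm.eq_zero_iff 0).mpr rfl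
  have hneg : Nm.N (-x) = Nm.N x := by
    have := Nm.smul_eq (-1) x
    simpa using this
  have := Nm.add_le x (-x)
  simp only [add_neg_cancel, h0, hneg] at this
  linarith

lemma MonNorm.neg_eq {k : ℕ} (Nm : MonNorm k) (x : Fin k → ℝ) : Nm.N (-x) = Nm.N x := by
  have := Nm.smul_eq (-1) x
  simpa using this

/-- Subadditivity of rpow for γ ≤ 1 on nonneg reals. -/
lemma rpow_add_le {a b γ : ℝ} (ha : 0 ≤ a) (hb : 0 ≤ b) (hγ0 : 0 < γ) (hγ1 : γ ≤ 1) :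
    (a + b) ^ γ ≤ a ^ γ + b ^ γ := by
  have := NNReal.rpow_add_le_add_rpow (a.toNNReal) (b.toNNReal) hγ0.le hγ1
  have h := NNReal.coe_le_coe.mpr this
  push_cast at h
  rwa [Real.coe_toNNReal a ha, Real.coe_toNNReal b hb] at h

/-- Key: |a^γ - b^γ| ≤ c^γ when a,b ≥ 0 and |a - b| ≤ c. -/
lemma abs_rpow_sub_le {a b c γ : ℝ} (ha : 0 ≤ a) (hb : 0 ≤ b) (hc : |a - b| ≤ c)
    (hγ0 : 0 < γ) (hγ1 : γ ≤ 1) : |a ^ γ - b ^ γ| ≤ c ^ γ := by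
  have hc0 : 0 ≤ c := le_trans (abs_nonneg _) hc
  wlog hab : b ≤ a generalizing a b
  · rw [abs_sub_comm]
    exact this hb ha (by rwa [abs_sub_comm]) (le_of_not_ge hab)
  have h1 : a ≤ b + (a - b) := by linarith
  have h2 : a ^ γ ≤ b ^ γ + (a - b) ^ γ :=
    le_trans (Real.rpow_le_rpow ha h1 hγ0.le)
      (rpow_add_le hb (by linarith) hγ0 hγ1)
  have h3 : (a - b) ^ γ ≤ c ^ γ := by
    refine Real.rpow_le_rpow (by linarith) ?_ hγ0.le
    calc a - b ≤ |a - b| := le_abs_self _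
    _ ≤ c := hc
  rw [abs_sub_le_iff]
  constructor
  · linarith
  · have : b ^ γ ≤ a ^ γ := Real.rpow_le_rpow hb hab hγ0.le
    have : (0:ℝ) ≤ c ^ γ := Real.rpow_nonneg hc0 _
    linarith

lemma vplus_lip {k : ℕ} (V : Finset (Fin k)) (Nm : MonNorm k) (x z : Fin k → ℝ) :
    |Nm.N (vplus V x) - Nm.N (vplus V z)| ≤ Nm.N (x - z) := by
  have key : ∀ u v : Fin k → ℝ, Nm.N (vplus V u) ≤ Nm.N (vplus V v) + Nm.N (u - v) := by
    intro u v
    have h1 : Nm.N (vplus V u) ≤ Nm.N (vplus V v + (vplus V u - vplus V v)) := by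
      simp
    have h2 : Nm.N (vplus V u - vplus V v) ≤ Nm.N (u - v) := by
      apply Nm.mono
      intro j
      simp only [vplus, Pi.sub_apply]
      by_cases hj : j ∈ V
      · simp only [hj, if_true]
        exact abs_max_sub_max_le_abs _ _ _
      · simp [hj]
    calc Nm.N (vplus V u) ≤ Nm.N (vplus V v + (vplus V u - vplus V v)) := h1
      _ ≤ Nm.N (vplus V v) + Nm.N (vplus V u - vplus V v) := Nm.add_le _ _
      _ ≤ Nm.N (vplus V v) + Nm.N (u - v) := by linarith
  rw [abs_sub_le_iff]
  constructor
  · linarith [key x z]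
  · have := key z x
    have hne : Nm.N (z - x) = Nm.N (x - z) := by
      rw [show z - x = -(x - z) by ring, Nm.neg_eq]
    linarith

/-- the functions `h₊(x) = C‖(x)_{V+}‖^γ` and `h₋(x) = −C‖(x)_{V−}‖^γ`
belong to the monotone Hölder class `Λ₊,V(γ,C)`. -/
theorem stmt_0 {k : ℕ} (V : Finset (Fin k)) (Nm : MonNorm k) (γ C : ℝ)
    (hγ0 : 0 < γ) (hγ1 : γ ≤ 1) (hC : 0 < C) :
    (fun x => C * Nm.N (vplus V x) ^ γ) ∈ Lam V Nm.N γ C ∧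
    (fun x => -(C * Nm.N (vminus V x) ^ γ)) ∈ Lam V Nm.N γ C := by
  have holder : ∀ x z : Fin k → ℝ,
      |Nm.N (vplus V x) ^ γ - Nm.N (vplus V z) ^ γ| ≤ Nm.N (x - z) ^ γ := fun x z =>
    abs_rpow_sub_le (Nm.nonneg _) (Nm.nonneg _) (vplus_lip V Nm x z) hγ0 hγ1
  constructor
  · constructor
    · intro x z
      have := holder x z
      calc |C * Nm.N (vplus V x) ^ γ - C * Nm.N (vplus V z) ^ γ|
          = C * |Nm.N (vplus V x) ^ γ - Nm.N (vplus V z) ^ γ| := by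
            rw [← mul_sub, abs_mul, abs_of_pos hC]
        _ ≤ C * Nm.N (x - z) ^ γ := by nlinarith [holder x z]
    · intro x z hV hnV
      have hN : Nm.N (vplus V z) ≤ Nm.N (vplus V x) := by
        apply Nm.mono
        intro j
        simp only [vplus]
        by_cases hj : j ∈ V
        · simp only [hj, if_true]
          rw [abs_of_nonneg (le_max_right _ _), abs_of_nonneg (le_max_right _ _)]
          exact max_le_max (hV j hj) le_rfl
        · simp [hj, hnV j hj]
      have := Real.rpow_le_rpow (Nm.nonneg _) hN hγ0.le
      dsimp only
      nlinarith
  · constructor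
    · intro x z
      have key := abs_rpow_sub_le (c := Nm.N (x - z)) (Nm.nonneg (vminus V x)) (Nm.nonneg (vminus V z))
        (by
          have := vplus_lip V Nm (-x) (-z)
          rw [show -x - -z = -(x - z) by ring, Nm.neg_eq] at this
          exact this) hγ0 hγ1
      calc |(-(C * Nm.N (vminus V x) ^ γ)) - (-(C * Nm.N (vminus V z) ^ γ))|
          = C * |Nm.N (vminus V x) ^ γ - Nm.N (vminus V z) ^ γ| := by
            rw [show (-(C * Nm.N (vminus V x) ^ γ)) - (-(C * Nm.N (vminus V z) ^ γ))
              = -(C * (Nm.N (vminus V x) ^ γ - Nm.N (vminus V z) ^ γ)) by ring,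
              abs_neg, abs_mul, abs_of_pos hC]
        _ ≤ C * Nm.N (x - z) ^ γ := by nlinarith
    · intro x z hV hnV
      have hN : Nm.N (vminus V x) ≤ Nm.N (vminus V z) := by
        apply Nm.mono
        intro j
        simp only [vminus, vplus, Pi.neg_apply]
        by_cases hj : j ∈ V
        · simp only [hj, if_true]
          rw [abs_of_nonneg (le_max_right _ _), abs_of_nonneg (le_max_right _ _)]
          exact max_le_max (neg_le_neg (hV j hj)) le_rfl
        · simp [hj, hnV j hj]
      have := Real.rpow_le_rpow (Nm.nonneg _) hN hγ0.le
      dsimp only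
      nlinarith
end

section
/- Suppose the norm ‖·‖ on ℝ^k satisfies Assumption 1, and fix f₀ ∈ ℝ, γ ∈ (0,1], and C > 0. Let Λ₊,V^{f₀}(γ,C) := {f ∈ Λ₊,V(γ,C) : f(0) = f₀}. Then for every x ∈ ℝ^k, the maximum of f(x) over f ∈ Λ₊,V^{f₀}(γ,C) equals f₀ + C‖(x)_{V+}‖^γ and the minimum of f(x) over f ∈ Λ₊,V^{f₀}(γ,C) equals f₀ − C‖(x)_{V−}‖^γ; both extrema are attained by elements of Λ₊,V^{f₀}(γ,C). -/
open MeasureTheory Filter Finset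

/- Auxiliary lemmas -/

lemma monnorm_zero {k : ℕ} (Nm : MonNorm k) : Nm.N 0 = 0 :=
  (Nm.eq_zero_iff 0).mpr rfl

lemma monnorm_neg {k : ℕ} (Nm : MonNorm k) (z : Fin k → ℝ) : Nm.N (-z) = Nm.N z := by
  have := Nm.smul_eq (-1) z
  simpa using this

lemma monnorm_nonneg {k : ℕ} (Nm : MonNorm k) (z : Fin k → ℝ) : 0 ≤ Nm.N z := by
  have h := Nm.add_le z (-z)
  rw [add_neg_cancel, monnorm_zero, monnorm_neg] at h
  linarith

lemma rpow_sub_le {a b γ : ℝ} (hb : 0 ≤ b) (hba : b ≤ a) (hγ0 : 0 < γ) (hγ1 : γ ≤ 1) :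
    a ^ γ - b ^ γ ≤ (a - b) ^ γ := by
  have h := rpow_add_le (sub_nonneg.mpr hba) hb hγ0 hγ1
  rw [sub_add_cancel] at h
  linarith

/-- `vplus` is 1-Lipschitz coordinatewise. -/
lemma vplus_coord_lip {k : ℕ} (V : Finset (Fin k)) (z w : Fin k → ℝ) (j : Fin k) :
    |vplus V z j - vplus V w j| ≤ |z j - w j| := by
  unfold vplus
  by_cases h : j ∈ V <;> simp [h]
  exact abs_sub_abs_le_abs_sub (z j) (w j) |>.trans_eq rfl |> fun _ => by
    have := abs_max_sub_max_le_abs (z j) (w j) 0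
    simpa using this

/-- Key Hölder bound for `z ↦ Nm.N (vplus V z) ^ γ`. -/
lemma vplus_holder {k : ℕ} (V : Finset (Fin k)) (Nm : MonNorm k) {γ : ℝ}
    (hγ0 : 0 < γ) (hγ1 : γ ≤ 1) (z w : Fin k → ℝ) :
    Nm.N (vplus V z) ^ γ - Nm.N (vplus V w) ^ γ ≤ Nm.N (z - w) ^ γ := by
  by_cases hle : Nm.N (vplus V z) ≤ Nm.N (vplus V w)
  · have h1 : Nm.N (vplus V z) ^ γ ≤ Nm.N (vplus V w) ^ γ :=
      Real.rpow_le_rpow (monnorm_nonneg Nm _) hle hγ0.le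
    have h2 : (0:ℝ) ≤ Nm.N (z - w) ^ γ :=
      Real.rpow_nonneg (monnorm_nonneg Nm _) γ
    linarith
  push_neg at hle
  -- triangle inequality: N(vplus z) ≤ N(vplus w) + N(vplus z - vplus w)
  have htri : Nm.N (vplus V z) ≤ Nm.N (vplus V w) + Nm.N (vplus V z - vplus V w) := by
    have := Nm.add_le (vplus V w) (vplus V z - vplus V w)
    rwa [add_sub_cancel] at this
  have hmono : Nm.N (vplus V z - vplus V w) ≤ Nm.N (z - w) := by
    apply Nm.mono
    intro j
    exact vplus_coord_lip V z w j
  have h3 : Nm.N (vplus V z) ^ γ - Nm.N (vplus V w) ^ γ ≤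
      (Nm.N (vplus V z) - Nm.N (vplus V w)) ^ γ :=
    rpow_sub_le (monnorm_nonneg Nm _) hle.le hγ0 hγ1
  have h4 : (Nm.N (vplus V z) - Nm.N (vplus V w)) ^ γ ≤ Nm.N (z - w) ^ γ := by
    apply Real.rpow_le_rpow (by linarith)
    · calc Nm.N (vplus V z) - Nm.N (vplus V w) ≤ Nm.N (vplus V z - vplus V w) := by linarith
        _ ≤ Nm.N (z - w) := hmono
    · exact hγ0.le
  linarith

lemma vplus_zero {k : ℕ} (V : Finset (Fin k)) : vplus V (0 : Fin k → ℝ) = 0 := by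
  funext j; unfold vplus; by_cases h : j ∈ V <;> simp [h]

lemma vplus_mono {k : ℕ} (V : Finset (Fin k)) (Nm : MonNorm k) (a b : Fin k → ℝ)
    (h1 : ∀ j ∈ V, b j ≤ a j) (h2 : ∀ j ∉ V, a j = b j) :
    Nm.N (vplus V b) ≤ Nm.N (vplus V a) := by
  apply Nm.mono
  intro j
  unfold vplus
  by_cases h : j ∈ V
  · simp only [h, if_true]
    rw [abs_of_nonneg (le_max_right _ _), abs_of_nonneg (le_max_right _ _)]
    exact max_le_max (h1 j h) le_rfl
  · simp [h, h2 j h]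

/-- over the class `Λ₊,V^{f₀}(γ,C)` of functions in `Λ₊,V(γ,C)` with
`f(0) = f₀`, the value at `x` is maximized by `f₀ + C‖(x)_{V+}‖^γ` and minimized by
`f₀ − C‖(x)_{V−}‖^γ`, and both extrema are attained. -/
theorem stmt_3 {k : ℕ} (V : Finset (Fin k)) (Nm : MonNorm k) (γ C f₀ : ℝ)
    (hγ0 : 0 < γ) (hγ1 : γ ≤ 1) (hC : 0 < C) (x : Fin k → ℝ) :
    IsGreatest ((fun f : (Fin k → ℝ) → ℝ => f x) ''
        {f | f ∈ Lam V Nm.N γ C ∧ f 0 = f₀}) (f₀ + C * Nm.N (vplus V x) ^ γ) ∧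
    IsLeast ((fun f : (Fin k → ℝ) → ℝ => f x) ''
        {f | f ∈ Lam V Nm.N γ C ∧ f 0 = f₀}) (f₀ - C * Nm.N (vminus V x) ^ γ) := by
  -- the extremal functions
  set g : (Fin k → ℝ) → ℝ := fun z => f₀ + C * Nm.N (vplus V z) ^ γ with hg
  set h : (Fin k → ℝ) → ℝ := fun z => f₀ - C * Nm.N (vminus V z) ^ γ with hh
  have hg0 : g 0 = f₀ := by
    simp [hg, vplus_zero, monnorm_zero, Real.zero_rpow hγ0.ne']
  have hh0 : h 0 = f₀ := by
    simp [hh, vminus, vplus_zero, monnorm_zero, Real.zero_rpow hγ0.ne']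
  have hgHolder : HolderW Nm.N γ C g := by
    intro z w
    rw [abs_sub_le_iff]
    constructor
    · have := vplus_holder V Nm hγ0 hγ1 z w
      simp only [hg]
      nlinarith [this]
    · have := vplus_holder V Nm hγ0 hγ1 w z
      have hsym : Nm.N (w - z) = Nm.N (z - w) := by
        rw [← monnorm_neg Nm (w - z), neg_sub]
      rw [hsym] at this
      simp only [hg]
      nlinarith [this]
  have hhHolder : HolderW Nm.N γ C h := by
    intro z w
    rw [abs_sub_le_iff]
    constructor
    · have := vplus_holder V Nm hγ0 hγ1 (-w) (-z)
      have : Nm.N (vplus V (-w)) ^ γ - Nm.N (vplus V (-z)) ^ γ ≤ Nm.N (z - w) ^ γ := by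
        have hsym : Nm.N (-w - -z) = Nm.N (z - w) := by
          congr 1; funext j; simp; ring
        rwa [hsym] at this
      simp only [hh, vminus]
      nlinarith [this]
    · have := vplus_holder V Nm hγ0 hγ1 (-z) (-w)
      have : Nm.N (vplus V (-z)) ^ γ - Nm.N (vplus V (-w)) ^ γ ≤ Nm.N (z - w) ^ γ := by
        have hsym : Nm.N (-z - -w) = Nm.N (w - z) := by
          congr 1; funext j; simp; ring
        have hsym2 : Nm.N (w - z) = Nm.N (z - w) := by
          rw [← monnorm_neg Nm (w - z), neg_sub]
        rwa [hsym, hsym2] at this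
      simp only [hh, vminus]
      nlinarith [this]
  have hgMono : MonoV V g := by
    intro a b h1 h2
    simp only [hg]
    have := vplus_mono V Nm a b h1 h2
    have hpow : Nm.N (vplus V b) ^ γ ≤ Nm.N (vplus V a) ^ γ :=
      Real.rpow_le_rpow (monnorm_nonneg Nm _) this hγ0.le
    nlinarith
  have hhMono : MonoV V h := by
    intro a b h1 h2
    simp only [hh, vminus]
    have := vplus_mono V Nm (-b) (-a) (fun j hj => neg_le_neg (h1 j hj))
      (fun j hj => by simp [h2 j hj])
    have hpow : Nm.N (vplus V (-a)) ^ γ ≤ Nm.N (vplus V (-b)) ^ γ :=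
      Real.rpow_le_rpow (monnorm_nonneg Nm _) this hγ0.le
    nlinarith
  constructor
  · constructor
    · exact ⟨g, ⟨⟨hgHolder, hgMono⟩, hg0⟩, rfl⟩
    · rintro y ⟨f, ⟨⟨hfH, hfM⟩, hf0⟩, rfl⟩
      -- f x ≤ f (vplus V x) ≤ f 0 + C N(vplus x)^γ
      have h1 : f x ≤ f (vplus V x) := by
        apply hfM
        · intro j hj; unfold vplus; simp [hj]
        · intro j hj; unfold vplus; simp [hj]
      have h2 : f (vplus V x) - f 0 ≤ C * Nm.N (vplus V x - 0) ^ γ :=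
        (abs_le.mp (hfH (vplus V x) 0)).2
      rw [sub_zero, hf0] at h2
      linarith
  · constructor
    · exact ⟨h, ⟨⟨hhHolder, hhMono⟩, hh0⟩, rfl⟩
    · rintro y ⟨f, ⟨⟨hfH, hfM⟩, hf0⟩, rfl⟩
      -- f x ≥ f (-(vminus V x)) ≥ f 0 - C N(vminus x)^γ
      have h1 : f (-(vminus V x)) ≤ f x := by
        apply hfM
        · intro j hj
          unfold vminus vplus
          simp only [hj, if_true, Pi.neg_apply]
          have := le_max_right (-x j) 0
          simp [neg_le]
        · intro j hj
          unfold vminus vplus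
          simp [hj]
      have h2 : f 0 - f (-(vminus V x)) ≤ C * Nm.N (0 - -(vminus V x)) ^ γ :=
        (abs_le.mp (hfH 0 (-(vminus V x)))).2
      rw [zero_sub, neg_neg, hf0] at h2
      linarith
end

section
/- Suppose the norm ‖·‖ on ℝ^k satisfies Assumption 1, 0 < γ₂ ≤ γ₁ ≤ 1, 0 < C₁ ≤ C₂, and Λ₊,V(γ₁,C₁) ⊆ Λ₊,V(γ₂,C₂). For any n ≥ 1 design points x₁,…,x_n ∈ ℝ^k, the ordered modulus at δ = 0 (with σ ≡ 1) satisfies ω(0, Λ₊,V(γ₁,C₁), Λ₊,V(γ₂,C₂)) = min_{1≤i≤n} { C₁‖(x_i)_{V+}‖^{γ₁} + C₂‖(x_i)_{V−}‖^{γ₂} }, and the supremum defining the left-hand side is attained. -/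
open MeasureTheory Filter Finset

/-- Ordered modulus of continuity (with `σ ≡ 1`) for the functional `f ↦ f(0)`. -/
noncomputable def ordMod {k : ℕ} (n : ℕ) (x : Fin n → (Fin k → ℝ)) (δ : ℝ)
    (F G : Set ((Fin k → ℝ) → ℝ)) : ℝ :=
  sSup {d : ℝ | ∃ f ∈ F, ∃ g ∈ G, (∑ i, (g (x i) - f (x i)) ^ 2) ≤ δ ^ 2 ∧ d = g 0 - f 0}

namespace Stmt6Aux

variable {k : ℕ}

lemma N_neg (Nm : MonNorm k) (z : Fin k → ℝ) : Nm.N (-z) = Nm.N z := by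
  have := Nm.smul_eq (-1) z
  simpa using this

lemma N_zero (Nm : MonNorm k) : Nm.N 0 = 0 := (Nm.eq_zero_iff 0).mpr rfl

lemma N_nonneg (Nm : MonNorm k) (z : Fin k → ℝ) : 0 ≤ Nm.N z := by
  have h := Nm.add_le z (-z)
  rw [add_neg_cancel, N_zero, N_neg] at h
  linarith

lemma abs_N_sub (Nm : MonNorm k) (z w : Fin k → ℝ) :
    |Nm.N z - Nm.N w| ≤ Nm.N (z - w) := by
  have h1 : Nm.N z ≤ Nm.N w + Nm.N (z - w) := by
    have := Nm.add_le w (z - w)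
    simpa using this
  have h2 : Nm.N w ≤ Nm.N z + Nm.N (z - w) := by
    have := Nm.add_le z (w - z)
    have hneg : Nm.N (w - z) = Nm.N (z - w) := by
      rw [← N_neg Nm (w - z)]; congr 1; abel
    rw [hneg] at this
    simpa using this
  rw [abs_sub_le_iff]
  constructor <;> linarith

lemma N_vplus_sub (Nm : MonNorm k) (V : Finset (Fin k)) (z w : Fin k → ℝ) :
    Nm.N (vplus V z - vplus V w) ≤ Nm.N (z - w) := by
  apply Nm.mono
  intro j
  simp only [Pi.sub_apply, vplus]
  by_cases hj : j ∈ V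
  · simp only [hj, if_true]
    exact abs_max_sub_max_le_abs _ _ _
  · simp [hj]

/-- Subadditivity of rpow on nonneg reals for exponents in `[0,1]`. -/
lemma rpow_subadd {a b p : ℝ} (ha : 0 ≤ a) (hb : 0 ≤ b) (hp : 0 ≤ p) (hp1 : p ≤ 1) :
    (a + b) ^ p ≤ a ^ p + b ^ p := by
  have h := NNReal.rpow_add_le_add_rpow a.toNNReal b.toNNReal hp hp1
  have h' : ((a.toNNReal + b.toNNReal : NNReal) : ℝ) ^ p
      ≤ ((a.toNNReal : ℝ)) ^ p + ((b.toNNReal : ℝ)) ^ p := by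
    calc ((a.toNNReal + b.toNNReal : NNReal) : ℝ) ^ p
        = (((a.toNNReal + b.toNNReal) ^ p : NNReal) : ℝ) := by
          rw [NNReal.coe_rpow]
      _ ≤ (((a.toNNReal ^ p + b.toNNReal ^ p : NNReal)) : ℝ) := by exact_mod_cast h
      _ = ((a.toNNReal : ℝ)) ^ p + ((b.toNNReal : ℝ)) ^ p := by
          rw [NNReal.coe_add, NNReal.coe_rpow, NNReal.coe_rpow]
  rwa [Real.coe_toNNReal a ha, Real.coe_toNNReal b hb, NNReal.coe_add,
    Real.coe_toNNReal a ha, Real.coe_toNNReal b hb] at h'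

lemma abs_rpow_sub_rpow {a b p : ℝ} (ha : 0 ≤ a) (hb : 0 ≤ b) (hp : 0 < p) (hp1 : p ≤ 1) :
    |a ^ p - b ^ p| ≤ |a - b| ^ p := by
  wlog hab : b ≤ a with H
  · push_neg at hab
    have := H hb ha hp hp1 hab.le
    rw [abs_sub_comm a b]
    rwa [abs_sub_comm] at this
  have h1 : a ^ p ≤ b ^ p + (a - b) ^ p := by
    have : a = b + (a - b) := by ring
    calc a ^ p = (b + (a - b)) ^ p := by rw [← this]
      _ ≤ b ^ p + (a - b) ^ p := rpow_subadd hb (by linarith) hp.le hp1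
  have h2 : b ^ p ≤ a ^ p := Real.rpow_le_rpow hb hab hp.le
  rw [abs_of_nonneg (by linarith : (0:ℝ) ≤ a ^ p - b ^ p),
    abs_of_nonneg (by linarith : (0:ℝ) ≤ a - b)]
  linarith

/-- Key inequality: any member of `Lam` satisfies the one-sided bound via `vplus`. -/
lemma key (V : Finset (Fin k)) (Nm : MonNorm k) {γ C : ℝ} {h : (Fin k → ℝ) → ℝ}
    (hh : h ∈ Lam V Nm.N γ C) (z w : Fin k → ℝ) :
    h z - h w ≤ C * Nm.N (vplus V (z - w)) ^ γ := by
  set u : Fin k → ℝ := w + vplus V (z - w) with hu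
  have h1 : h z ≤ h u := by
    apply hh.2 u z
    · intro j hj
      simp only [hu, Pi.add_apply, vplus, hj, if_true]
      have : z j - w j ≤ max (z j - w j) 0 := le_max_left _ _
      simp only [Pi.sub_apply] at this ⊢
      linarith
    · intro j hj
      simp only [hu, Pi.add_apply, vplus, hj, if_false, Pi.sub_apply]
      ring
  have h2 : h u - h w ≤ C * Nm.N (u - w) ^ γ := le_trans (le_abs_self _) (hh.1 u w)
  have h3 : u - w = vplus V (z - w) := by
    rw [hu]; abel
  rw [h3] at h2
  linarith

/-- Membership of `z ↦ c + C * N(vplus V (z - w))^γ` in `Lam V N γ C`. -/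
lemma term_mem (V : Finset (Fin k)) (Nm : MonNorm k) {γ C : ℝ}
    (hγ0 : 0 < γ) (hγ1 : γ ≤ 1) (hC : 0 ≤ C) (c : ℝ) (w : Fin k → ℝ) :
    (fun z => c + C * Nm.N (vplus V (z - w)) ^ γ) ∈ Lam V Nm.N γ C := by
  constructor
  · intro a b
    have habs : |Nm.N (vplus V (a - w)) ^ γ - Nm.N (vplus V (b - w)) ^ γ|
        ≤ |Nm.N (vplus V (a - w)) - Nm.N (vplus V (b - w))| ^ γ :=
      abs_rpow_sub_rpow (N_nonneg Nm _) (N_nonneg Nm _) hγ0 hγ1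
    have h2 : |Nm.N (vplus V (a - w)) - Nm.N (vplus V (b - w))| ≤ Nm.N (a - b) := by
      refine le_trans (abs_N_sub Nm _ _) ?_
      have := N_vplus_sub Nm V (a - w) (b - w)
      have heq : a - w - (b - w) = a - b := by abel
      rwa [heq] at this
    have h3 : |Nm.N (vplus V (a - w)) - Nm.N (vplus V (b - w))| ^ γ ≤ Nm.N (a - b) ^ γ :=
      Real.rpow_le_rpow (abs_nonneg _) h2 hγ0.le
    have heq : c + C * Nm.N (vplus V (a - w)) ^ γ - (c + C * Nm.N (vplus V (b - w)) ^ γ)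
        = C * (Nm.N (vplus V (a - w)) ^ γ - Nm.N (vplus V (b - w)) ^ γ) := by ring
    rw [heq, abs_mul, abs_of_nonneg hC]
    exact mul_le_mul_of_nonneg_left (le_trans habs h3) hC
  · intro a b hab hoff
    have : Nm.N (vplus V (b - w)) ≤ Nm.N (vplus V (a - w)) := by
      apply Nm.mono
      intro j
      simp only [vplus, Pi.sub_apply]
      by_cases hj : j ∈ V
      · simp only [hj, if_true]
        rw [abs_of_nonneg (le_max_right _ _), abs_of_nonneg (le_max_right _ _)]
        exact max_le_max (by linarith [hab j hj]) le_rfl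
      · simp [hj, hoff j hj]
    have := Real.rpow_le_rpow (N_nonneg Nm _) this hγ0.le
    show c + C * Nm.N (vplus V (b - w)) ^ γ ≤ c + C * Nm.N (vplus V (a - w)) ^ γ
    nlinarith

lemma vplus_self_sub (V : Finset (Fin k)) (w : Fin k → ℝ) : vplus V (w - w) = 0 := by
  funext j
  simp [vplus]

end Stmt6Aux

open Stmt6Aux in
/-- the ordered modulus at `δ = 0` equals
`min_i { C₁‖(x_i)_{V+}‖^{γ₁} + C₂‖(x_i)_{V−}‖^{γ₂} }`, and the supremum is attained. -/
theorem stmt_6 {k : ℕ} (V : Finset (Fin k)) (Nm : MonNorm k)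
    (γ₁ γ₂ C₁ C₂ : ℝ)
    (hγ₂0 : 0 < γ₂) (hγ : γ₂ ≤ γ₁) (hγ₁1 : γ₁ ≤ 1)
    (hC₁ : 0 < C₁) (hC : C₁ ≤ C₂)
    (hsub : Lam V Nm.N γ₁ C₁ ⊆ Lam V Nm.N γ₂ C₂)
    (n : ℕ) (hn : 0 < n) (x : Fin n → (Fin k → ℝ)) :
    IsGreatest
      {d : ℝ | ∃ f ∈ Lam V Nm.N γ₁ C₁, ∃ g ∈ Lam V Nm.N γ₂ C₂,
        (∑ i, (g (x i) - f (x i)) ^ 2) ≤ (0 : ℝ) ^ 2 ∧ d = g 0 - f 0}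
      (Finset.univ.inf' (Finset.univ_nonempty_iff.mpr ⟨⟨0, hn⟩⟩)
        (fun i => C₁ * Nm.N (vplus V (x i)) ^ γ₁ + C₂ * Nm.N (vminus V (x i)) ^ γ₂)) ∧
    ordMod n x 0 (Lam V Nm.N γ₁ C₁) (Lam V Nm.N γ₂ C₂)
      = Finset.univ.inf' (Finset.univ_nonempty_iff.mpr ⟨⟨0, hn⟩⟩)
        (fun i => C₁ * Nm.N (vplus V (x i)) ^ γ₁ + C₂ * Nm.N (vminus V (x i)) ^ γ₂) := by
  have hγ₁0 : 0 < γ₁ := lt_of_lt_of_le hγ₂0 hγ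
  have hne : (Finset.univ : Finset (Fin n)).Nonempty := Finset.univ_nonempty_iff.mpr ⟨⟨0, hn⟩⟩
  set fstar : (Fin k → ℝ) → ℝ := fun z => C₁ * Nm.N (vplus V z) ^ γ₁ with hfstar
  have hf_mem : fstar ∈ Lam V Nm.N γ₁ C₁ := by
    have := term_mem V Nm hγ₁0 hγ₁1 hC₁.le 0 (0 : Fin k → ℝ)
    convert this using 2 with z
    simp [hfstar]
  have hf_mem2 : fstar ∈ Lam V Nm.N γ₂ C₂ := hsub hf_mem
  set gstar : (Fin k → ℝ) → ℝ :=
    fun z => Finset.univ.inf' hne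
      (fun i => fstar (x i) + C₂ * Nm.N (vplus V (z - x i)) ^ γ₂) with hgstar
  have hC₂ : (0:ℝ) < C₂ := lt_of_lt_of_le hC₁ hC
  -- each term of gstar is in Lam γ₂ C₂
  have hterm : ∀ i : Fin n,
      (fun z => fstar (x i) + C₂ * Nm.N (vplus V (z - x i)) ^ γ₂) ∈ Lam V Nm.N γ₂ C₂ :=
    fun i => term_mem V Nm hγ₂0 (le_trans hγ hγ₁1) hC₂.le _ _
  -- gstar is in Lam γ₂ C₂
  have hg_mem : gstar ∈ Lam V Nm.N γ₂ C₂ := by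
    constructor
    · intro a b
      rw [abs_sub_le_iff]
      constructor
      · obtain ⟨j, _, hj⟩ := Finset.exists_mem_eq_inf' hne
          (fun i => fstar (x i) + C₂ * Nm.N (vplus V (b - x i)) ^ γ₂)
        have h1 : gstar a ≤ fstar (x j) + C₂ * Nm.N (vplus V (a - x j)) ^ γ₂ :=
          Finset.inf'_le _ (Finset.mem_univ j)
        have h2 := le_trans (le_abs_self _) ((hterm j).1 a b)
        simp only [hgstar]
        rw [hj] at *
        simp only at h1 h2 ⊢
        linarith
      · obtain ⟨j, _, hj⟩ := Finset.exists_mem_eq_inf' hne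
          (fun i => fstar (x i) + C₂ * Nm.N (vplus V (a - x i)) ^ γ₂)
        have h1 : gstar b ≤ fstar (x j) + C₂ * Nm.N (vplus V (b - x j)) ^ γ₂ :=
          Finset.inf'_le _ (Finset.mem_univ j)
        have h2 := le_trans (le_abs_self _) ((hterm j).1 b a)
        have hsym : Nm.N (b - a) = Nm.N (a - b) := by
          rw [← N_neg Nm (b - a)]; congr 1; abel
        simp only [hgstar]
        rw [hj] at *
        simp only at h1 h2 ⊢
        rw [hsym] at h2
        linarith
    · intro a b hab hoff
      obtain ⟨j, _, hj⟩ := Finset.exists_mem_eq_inf' hne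
        (fun i => fstar (x i) + C₂ * Nm.N (vplus V (a - x i)) ^ γ₂)
      have h1 : gstar b ≤ fstar (x j) + C₂ * Nm.N (vplus V (b - x j)) ^ γ₂ :=
        Finset.inf'_le _ (Finset.mem_univ j)
      have h2 : fstar (x j) + C₂ * Nm.N (vplus V (b - x j)) ^ γ₂
          ≤ fstar (x j) + C₂ * Nm.N (vplus V (a - x j)) ^ γ₂ := by
        have := (hterm j).2 a b hab hoff
        simpa using this
      simp only [hgstar] at h1 ⊢
      rw [hj]
      linarith
  -- gstar agrees with fstar at the design points
  have hagree : ∀ i, gstar (x i) = fstar (x i) := by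
    intro i
    apply le_antisymm
    · have h1 : gstar (x i) ≤ fstar (x i) + C₂ * Nm.N (vplus V (x i - x i)) ^ γ₂ :=
        Finset.inf'_le _ (Finset.mem_univ i)
      rw [vplus_self_sub, N_zero, Real.zero_rpow (ne_of_gt hγ₂0)] at h1
      simpa using h1
    · apply Finset.le_inf'
      intro m _
      have := key V Nm hf_mem2 (x i) (x m)
      linarith
  have hf0 : fstar 0 = 0 := by
    have : vplus V (0 : Fin k → ℝ) = 0 := by funext j; simp [vplus]
    simp [hfstar, this, N_zero, Real.zero_rpow (ne_of_gt hγ₁0)]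
  have hg0 : gstar 0 = Finset.univ.inf' hne
      (fun i => C₁ * Nm.N (vplus V (x i)) ^ γ₁ + C₂ * Nm.N (vminus V (x i)) ^ γ₂) := by
    apply Finset.inf'_congr hne rfl
    intro i _
    have : (0 : Fin k → ℝ) - x i = -(x i) := by funext j; simp
    simp [hfstar, vminus, this]
  have hmem : (Finset.univ.inf' hne
      (fun i => C₁ * Nm.N (vplus V (x i)) ^ γ₁ + C₂ * Nm.N (vminus V (x i)) ^ γ₂)) ∈
      {d : ℝ | ∃ f ∈ Lam V Nm.N γ₁ C₁, ∃ g ∈ Lam V Nm.N γ₂ C₂,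
        (∑ i, (g (x i) - f (x i)) ^ 2) ≤ (0 : ℝ) ^ 2 ∧ d = g 0 - f 0} := by
    refine ⟨fstar, hf_mem, gstar, hg_mem, ?_, ?_⟩
    · have : ∀ i ∈ Finset.univ, (gstar (x i) - fstar (x i)) ^ 2 = 0 := by
        intro i _
        rw [hagree i]; ring
      rw [Finset.sum_congr rfl this]
      simp
    · rw [hg0, hf0]; ring
  have hub : ∀ d ∈ {d : ℝ | ∃ f ∈ Lam V Nm.N γ₁ C₁, ∃ g ∈ Lam V Nm.N γ₂ C₂,
        (∑ i, (g (x i) - f (x i)) ^ 2) ≤ (0 : ℝ) ^ 2 ∧ d = g 0 - f 0},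
      d ≤ Finset.univ.inf' hne
        (fun i => C₁ * Nm.N (vplus V (x i)) ^ γ₁ + C₂ * Nm.N (vminus V (x i)) ^ γ₂) := by
    rintro d ⟨f, hf, g, hg, hsum, rfl⟩
    have hzero : ∀ i, g (x i) = f (x i) := by
      intro i
      have hnn : ∀ j ∈ Finset.univ, (0:ℝ) ≤ (g (x j) - f (x j)) ^ 2 :=
        fun j _ => sq_nonneg _
      have hsum0 : (∑ i, (g (x i) - f (x i)) ^ 2) = 0 := by
        have := Finset.sum_nonneg hnn
        simp only [ne_eq, OfNat.ofNat_ne_zero, not_false_eq_true, zero_pow] at hsum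
        linarith
      have := (Finset.sum_eq_zero_iff_of_nonneg hnn).mp hsum0 i (Finset.mem_univ i)
      have := pow_eq_zero_iff (n := 2) (by norm_num) |>.mp this
      linarith
    apply Finset.le_inf'
    intro i _
    have h1 : g 0 - g (x i) ≤ C₂ * Nm.N (vplus V ((0 : Fin k → ℝ) - x i)) ^ γ₂ :=
      key V Nm hg 0 (x i)
    have h2 : f (x i) - f 0 ≤ C₁ * Nm.N (vplus V (x i - (0 : Fin k → ℝ))) ^ γ₁ :=
      key V Nm hf (x i) 0
    have e1 : (0 : Fin k → ℝ) - x i = -(x i) := by funext j; simp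
    have e2 : x i - (0 : Fin k → ℝ) = x i := by funext j; simp
    rw [e1] at h1
    rw [e2] at h2
    have : vminus V (x i) = vplus V (-(x i)) := rfl
    rw [this]
    have := hzero i
    linarith
  refine ⟨⟨hmem, hub⟩, ?_⟩
  exact IsGreatest.csSup_eq ⟨hmem, hub⟩
end

section
/- Let α ∈ (0,1) and J ≥ 1. Let F₁,…,F_J be nonempty convex classes of functions ℝ^k → ℝ with F_j ⊆ F_J for every j, let L be a linear functional defined on a vector space of functions containing F_J, and fix design points x₁,…,x_n ∈ ℝ^k and σ : ℝ^k → (0,∞). Suppose {P_f : f ∈ F_J} is a family of probability measures on a common measurable space and, for each j = 1,…,J, ĉ^{ℓ,j} and ĉ^{u,j} are integrable real-valued random variables satisfying sup_{f∈F_j} E_{P_f}[Lf − ĉ^{ℓ,j}] ≤ ω(z_{1−α/(2J)}, F_J, F_j) and sup_{f∈F_j} E_{P_f}[ĉ^{u,j} − Lf] ≤ ω(z_{1−α/(2J)}, F_j, F_J). Then for every j = 1,…,J, sup_{f∈F_j} E_{P_f}[ min_{1≤ℓ≤J} ĉ^{u,ℓ} − max_{1≤ℓ≤J} ĉ^{ℓ,ℓ}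 ] ≤ (2 z_{1−α/(2J)} / z_{1−α/2}) · ω₊(z_{1−α/2}, F_j, F_J). -/
open MeasureTheory Filter Finset

/-- The `q`-quantile of the standard normal distribution. -/
noncomputable def gaussQuantile (q : ℝ) : ℝ :=
  sInf {t : ℝ | q ≤ ((ProbabilityTheory.gaussianReal 0 1) (Set.Iic t)).toReal}

/-- Ordered modulus of continuity for a linear functional `L` with noise scale `σ`. -/
noncomputable def ordModL {k : ℕ} (n : ℕ) (x : Fin n → (Fin k → ℝ))
    (σ : (Fin k → ℝ) → ℝ) (L : ((Fin k → ℝ) → ℝ) →ₗ[ℝ] ℝ) (δ : ℝ)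
    (F G : Set ((Fin k → ℝ) → ℝ)) : ℝ :=
  sSup {d : ℝ | ∃ f ∈ F, ∃ g ∈ G,
    (∑ i, ((g (x i) - f (x i)) / σ (x i)) ^ 2) ≤ δ ^ 2 ∧ d = L g - L f}

/-- Between-class modulus of continuity for a linear functional `L`. -/
noncomputable def betModL {k : ℕ} (n : ℕ) (x : Fin n → (Fin k → ℝ))
    (σ : (Fin k → ℝ) → ℝ) (L : ((Fin k → ℝ) → ℝ) →ₗ[ℝ] ℝ) (δ : ℝ)
    (F G : Set ((Fin k → ℝ) → ℝ)) : ℝ :=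
  sSup {d : ℝ | ∃ f ∈ F, ∃ g ∈ G,
    (∑ i, ((g (x i) - f (x i)) / σ (x i)) ^ 2) ≤ δ ^ 2 ∧ d = |L g - L f|}

/-! If `(f, g) ∈ F_j × F_J` are at distance at most `δ'`, then `f` and `f + (δ/δ')(g - f)`
lie in `F_j × F_J` (convexity of `F_J ⊇ F_j`) at distance at most `δ`, and `L` changes by
`(δ/δ')(Lg - Lf)` between them. Hence both ordered moduli `ω(δ', F_j, F_J)` and
`ω(δ', F_J, F_j)` are at most `(δ'/δ) ω₊(δ, F_j, F_J)`. The Bonferroni interval lies inside the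
`j`-th pair of one-sided bounds, so its expected length is at most the sum of their two expected
excesses over `Lf`, i.e. of the two ordered moduli. Take `δ = z_{1-α/2} ≤ δ' = z_{1-α/(2J)}`. -/

open ProbabilityTheory Topology

noncomputable def cdfQuantile (μ : Measure ℝ) (q : ℝ) : ℝ :=
  sInf {t | q ≤ cdf μ t}

section cdfQuantile

variable (μ : Measure ℝ) {q q' : ℝ}

lemma bddBelow_setOf_le_cdf (hq : 0 < q) : BddBelow {t | q ≤ cdf μ t} := by
  obtain ⟨b, hb⟩ :=
    ((tendsto_cdf_atBot μ).eventually (eventually_lt_nhds hq)).exists_forall_of_atBot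
  exact ⟨b, fun t ht => le_of_not_gt fun htb => (hb t htb.le).not_ge ht⟩

lemma nonempty_setOf_le_cdf (hq : q < 1) : {t | q ≤ cdf μ t}.Nonempty :=
  ((tendsto_cdf_atTop μ).eventually (eventually_ge_nhds hq)).exists

lemma cdfQuantile_mono (hq : 0 < q) (hqq' : q ≤ q') (hq' : q' < 1) :
    cdfQuantile μ q ≤ cdfQuantile μ q' :=
  csInf_le_csInf (bddBelow_setOf_le_cdf μ hq) (nonempty_setOf_le_cdf μ hq')
    fun _ ht => hqq'.trans ht

lemma cdfQuantile_pos (hq : cdf μ 0 < q) (hq1 : q < 1) : 0 < cdfQuantile μ q := by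
  have hright : ∀ᶠ t in 𝓝[>] 0, cdf μ t < q :=
    ((cdf μ).right_continuous 0).mono_left (nhdsWithin_mono _ Set.Ioi_subset_Ici_self)
      |>.eventually (eventually_lt_nhds hq)
  obtain ⟨ε, hεq, hε⟩ := (hright.and self_mem_nhdsWithin).exists
  refine hε.trans_le (le_csInf (nonempty_setOf_le_cdf μ hq1) fun t ht => ?_)
  by_contra! htε
  exact (hεq.trans_le' (monotone_cdf μ htε.le)).not_ge ht

end cdfQuantile

lemma cdf_standardGaussian_zero : cdf (gaussianReal 0 1) 0 = 1 / 2 := by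
  set Γ := gaussianReal 0 1
  have hsymm : Γ (Set.Iic 0) = Γ (Set.Ici 0) := by
    have hmap : Γ.map (fun x ↦ -x) = Γ := by simpa using gaussianReal_map_neg (μ := 0) (v := 1)
    conv_lhs => rw [← hmap, Measure.map_apply measurable_neg measurableSet_Iic]
    congr 1; ext; simp
  have hatom : Γ {0} = 0 :=
    gaussianReal_absolutelyContinuous 0 one_ne_zero Real.volume_singleton
  have htotal : Γ.real (Set.Iic 0) + Γ.real (Set.Ioi 0) = 1 := by
    rw [← Set.compl_Iic, measureReal_add_measureReal_compl measurableSet_Iic, probReal_univ]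
  have hsymm' : Γ.real (Set.Iic 0) = Γ.real (Set.Ioi 0) := by
    rw [measureReal_def, measureReal_def, hsymm, measure_congr (Ioi_ae_eq_Ici' hatom)]
  rw [cdf_eq_real]
  linarith

lemma gaussQuantile_eq_cdfQuantile (q : ℝ) :
    gaussQuantile q = cdfQuantile (gaussianReal 0 1) q := by
  simp only [gaussQuantile, cdfQuantile, cdf_eq_real, measureReal_def]

lemma gaussQuantile_pos {q : ℝ} (hq : 1 / 2 < q) (hq1 : q < 1) : 0 < gaussQuantile q := by
  rw [gaussQuantile_eq_cdfQuantile]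
  exact cdfQuantile_pos _ (cdf_standardGaussian_zero ▸ hq) hq1

lemma gaussQuantile_mono {q q' : ℝ} (hq : 0 < q) (hqq' : q ≤ q') (hq' : q' < 1) :
    gaussQuantile q ≤ gaussQuantile q' := by
  simpa only [gaussQuantile_eq_cdfQuantile] using cdfQuantile_mono _ hq hqq' hq'

section Modulus

variable {k n : ℕ} (x : Fin n → Fin k → ℝ) (σ : (Fin k → ℝ) → ℝ)
  (L : ((Fin k → ℝ) → ℝ) →ₗ[ℝ] ℝ) {F G : Set ((Fin k → ℝ) → ℝ)} {δ δ' : ℝ}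

noncomputable def weightedSqDist (f g : (Fin k → ℝ) → ℝ) : ℝ :=
  ∑ i, ((g (x i) - f (x i)) / σ (x i)) ^ 2

def betModSet (δ : ℝ) (F G : Set ((Fin k → ℝ) → ℝ)) : Set ℝ :=
  {d | ∃ f ∈ F, ∃ g ∈ G, weightedSqDist x σ f g ≤ δ ^ 2 ∧ d = |L g - L f|}

lemma betModL_eq_sSup : betModL n x σ L δ F G = sSup (betModSet x σ L δ F G) := rfl

lemma weightedSqDist_comm (f g : (Fin k → ℝ) → ℝ) :
    weightedSqDist x σ f g = weightedSqDist x σ g f := by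
  simp only [weightedSqDist, ← neg_sub (f _), neg_div, neg_sq]

lemma weightedSqDist_convexComb (f g : (Fin k → ℝ) → ℝ) (t : ℝ) :
    weightedSqDist x σ f ((1 - t) • f + t • g) = t ^ 2 * weightedSqDist x σ f g := by
  simp only [weightedSqDist, mul_sum]
  refine sum_congr rfl fun i _ => ?_
  simp only [Pi.add_apply, Pi.smul_apply, smul_eq_mul]
  ring

lemma mul_abs_mem_betModSet (hG : Convex ℝ G) (hFG : F ⊆ G) {t : ℝ} (ht0 : 0 ≤ t)
    (ht1 : t ≤ 1) {f g : (Fin k → ℝ) → ℝ} (hf : f ∈ F) (hg : g ∈ G)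
    (hfg : weightedSqDist x σ f g ≤ δ ^ 2) :
    t * |L g - L f| ∈ betModSet x σ L (t * δ) F G := by
  refine ⟨f, hf, (1 - t) • f + t • g, hG (hFG hf) hg (by linarith) ht0 (by ring), ?_, ?_⟩
  · rw [weightedSqDist_convexComb, mul_pow]
    exact mul_le_mul_of_nonneg_left hfg (sq_nonneg t)
  · rw [map_add, map_smul, map_smul, smul_eq_mul, smul_eq_mul,
      show (1 - t) * L f + t * L g - L f = t * (L g - L f) by ring, abs_mul, abs_of_nonneg ht0]

lemma sSup_le_betModL (hG : Convex ℝ G) (hFG : F ⊆ G) (hδ : 0 < δ) (hδδ' : δ ≤ δ')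
    (hB : BddAbove (betModSet x σ L δ F G)) {S : Set ℝ}
    (hS : ∀ d ∈ S, ∃ f ∈ F, ∃ g ∈ G, weightedSqDist x σ f g ≤ δ' ^ 2 ∧ d ≤ |L g - L f|) :
    sSup S ≤ δ' / δ * betModL n x σ L δ F G := by
  have hδ' : 0 < δ' := hδ.trans_le hδδ'
  have hbet : 0 ≤ betModL n x σ L δ F G :=
    Real.sSup_nonneg fun _ ⟨_, _, _, _, _, hd⟩ => hd ▸ abs_nonneg _
  refine Real.sSup_le (fun d hd => ?_) (by positivity)
  obtain ⟨f, hf, g, hg, hfg, hd⟩ := hS d hd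
  have hmem := mul_abs_mem_betModSet x σ L hG hFG (div_nonneg hδ.le hδ'.le)
    ((div_le_one hδ').mpr hδδ') hf hg hfg
  rw [div_mul_cancel₀ _ hδ'.ne'] at hmem
  have hle : δ / δ' * |L g - L f| ≤ betModL n x σ L δ F G := le_csSup hB hmem
  calc d ≤ |L g - L f| := hd
    _ = δ' / δ * (δ / δ' * |L g - L f|) := by field_simp
    _ ≤ δ' / δ * betModL n x σ L δ F G := by gcongr

lemma ordModL_le_betModL (hG : Convex ℝ G) (hFG : F ⊆ G) (hδ : 0 < δ) (hδδ' : δ ≤ δ')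
    (hB : BddAbove (betModSet x σ L δ F G)) :
    ordModL n x σ L δ' F G ≤ δ' / δ * betModL n x σ L δ F G :=
  sSup_le_betModL x σ L hG hFG hδ hδδ' hB fun _ ⟨f, hf, g, hg, hfg, hd⟩ =>
    ⟨f, hf, g, hg, hfg, hd.trans_le (le_abs_self _)⟩

lemma ordModL_swap_le_betModL (hG : Convex ℝ G) (hFG : F ⊆ G) (hδ : 0 < δ) (hδδ' : δ ≤ δ')
    (hB : BddAbove (betModSet x σ L δ F G)) :
    ordModL n x σ L δ' G F ≤ δ' / δ * betModL n x σ L δ F G :=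
  sSup_le_betModL x σ L hG hFG hδ hδδ' hB fun _ ⟨g, hg, f, hf, hfg, hd⟩ =>
    ⟨f, hf, g, hg, weightedSqDist_comm x σ g f ▸ hfg,
      hd.trans_le ((le_abs_self _).trans_eq (abs_sub_comm _ _))⟩

lemma ordModL_self_eq_zero (hFG : F ⊆ G) (hδ : 0 ≤ δ) (hδδ' : δ ≤ δ')
    (hB : ¬BddAbove (betModSet x σ L δ F G)) : ordModL n x σ L δ' G G = 0 := by
  refine Real.sSup_of_not_bddAbove fun ⟨M, hM⟩ => hB ⟨M, ?_⟩
  rintro _ ⟨f, hf, g, hg, hfg, rfl⟩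
  have hfg' : weightedSqDist x σ f g ≤ δ' ^ 2 := hfg.trans (pow_le_pow_left₀ hδ hδδ' 2)
  exact abs_sub_le_iff.mpr ⟨hM ⟨f, hFG hf, g, hg, hfg', rfl⟩,
    hM ⟨g, hg, f, hFG hf, (weightedSqDist_comm x σ f g).ge.trans hfg', rfl⟩⟩

end Modulus

section IntervalLength

variable {Ω ι : Type*} [MeasurableSpace Ω] {μ : Measure Ω} {s : Finset ι}

lemma integrable_finset_inf' (hs : s.Nonempty) {g : ι → Ω → ℝ}
    (hg : ∀ i ∈ s, Integrable (g i) μ) : Integrable (fun ω => s.inf' hs fun i => g i ω) μ :=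
  (Finset.inf'_induction hs g (p := (Integrable · μ)) (fun _ h₁ _ h₂ => h₁.inf h₂) hg).congr
    (.of_forall (Finset.inf'_apply hs g))

lemma integrable_finset_sup' (hs : s.Nonempty) {g : ι → Ω → ℝ}
    (hg : ∀ i ∈ s, Integrable (g i) μ) : Integrable (fun ω => s.sup' hs fun i => g i ω) μ :=
  (Finset.sup'_induction hs g (p := (Integrable · μ)) (fun _ h₁ _ h₂ => h₁.sup h₂) hg).congr
    (.of_forall (Finset.sup'_apply hs g))

lemma integral_inf'_sub_sup'_le [IsFiniteMeasure μ] (hs : s.Nonempty) {lo up : ι → Ω → ℝ}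
    (hlo : ∀ i ∈ s, Integrable (lo i) μ) (hup : ∀ i ∈ s, Integrable (up i) μ) (a : ℝ)
    {i : ι} (hi : i ∈ s) :
    ∫ ω, ((s.inf' hs fun ℓ => up ℓ ω) - s.sup' hs fun ℓ => lo ℓ ω) ∂μ
      ≤ ∫ ω, (up i ω - a) ∂μ + ∫ ω, (a - lo i ω) ∂μ := by
  have hup_a : Integrable (fun ω => up i ω - a) μ := (hup i hi).sub (integrable_const a)
  have hlo_a : Integrable (fun ω => a - lo i ω) μ := (integrable_const a).sub (hlo i hi)
  rw [← integral_add hup_a hlo_a]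
  refine integral_mono ((integrable_finset_inf' hs hup).sub (integrable_finset_sup' hs hlo))
    (hup_a.add hlo_a) fun ω => ?_
  have := Finset.inf'_le (fun ℓ => up ℓ ω) hi
  have := Finset.le_sup' (fun ℓ => lo ℓ ω) hi
  dsimp only
  linarith

end IntervalLength

theorem integral_bonferroni_length_le {k : ℕ} {Ω ι : Type*} [MeasurableSpace Ω] [Fintype ι]
    {F : ι → Set ((Fin k → ℝ) → ℝ)} {jJ : ι} (hconv : Convex ℝ (F jJ))
    (hsub : ∀ j, F j ⊆ F jJ) (L : ((Fin k → ℝ) → ℝ) →ₗ[ℝ] ℝ) {n : ℕ}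
    (x : Fin n → Fin k → ℝ) (σ : (Fin k → ℝ) → ℝ) {δ δ' : ℝ} (hδ : 0 < δ) (hδδ' : δ ≤ δ')
    {P : ((Fin k → ℝ) → ℝ) → Measure Ω} (hP : ∀ f ∈ F jJ, IsProbabilityMeasure (P f))
    {cl cu : ι → Ω → ℝ}
    (hint : ∀ j, ∀ f ∈ F jJ, Integrable (cl j) (P f) ∧ Integrable (cu j) (P f))
    (hlo : ∀ j, ∀ f ∈ F j, ∫ ω, (L f - cl j ω) ∂(P f) ≤ ordModL n x σ L δ' (F jJ) (F j))
    (hup : ∀ j, ∀ f ∈ F j, ∫ ω, (cu j ω - L f) ∂(P f) ≤ ordModL n x σ L δ' (F j) (F jJ))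
    {j : ι} {f : (Fin k → ℝ) → ℝ} (hf : f ∈ F j) :
    ∫ ω, ((Finset.univ.inf' ⟨jJ, Finset.mem_univ jJ⟩ fun ℓ => cu ℓ ω) -
          (Finset.univ.sup' ⟨jJ, Finset.mem_univ jJ⟩ fun ℓ => cl ℓ ω)) ∂(P f)
      ≤ 2 * δ' / δ * betModL n x σ L δ (F j) (F jJ) := by
  have hfJ := hsub j hf
  have := hP f hfJ
  have hlength (ℓ : ι) := integral_inf'_sub_sup'_le ⟨jJ, Finset.mem_univ jJ⟩
    (fun ℓ _ => (hint ℓ f hfJ).1) (fun ℓ _ => (hint ℓ f hfJ).2) (L f) (Finset.mem_univ ℓ)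
  by_cases hB : BddAbove (betModSet x σ L δ (F j) (F jJ))
  · calc _ ≤ ∫ ω, (cu j ω - L f) ∂(P f) + ∫ ω, (L f - cl j ω) ∂(P f) := hlength _
      _ ≤ ordModL n x σ L δ' (F j) (F jJ) + ordModL n x σ L δ' (F jJ) (F j) :=
        add_le_add (hup j f hf) (hlo j f hf)
      _ ≤ δ' / δ * betModL n x σ L δ (F j) (F jJ) + δ' / δ * betModL n x σ L δ (F j) (F jJ) :=
        add_le_add (ordModL_le_betModL x σ L hconv (hsub j) hδ hδδ' hB)
          (ordModL_swap_le_betModL x σ L hconv (hsub j) hδ hδδ' hB)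
      _ = 2 * δ' / δ * betModL n x σ L δ (F j) (F jJ) := by ring
  · -- `sSup` of an unbounded set is `0`: both `ω₊(δ, F j, F jJ)` and `ω(δ', F jJ, F jJ)` vanish.
    have hzero := ordModL_self_eq_zero (n := n) x σ L (hsub j) hδ.le hδδ' hB
    calc _ ≤ ∫ ω, (cu jJ ω - L f) ∂(P f) + ∫ ω, (L f - cl jJ ω) ∂(P f) := hlength _
      _ ≤ 0 + 0 := add_le_add (hzero ▸ hup jJ f hfJ) (hzero ▸ hlo jJ f hfJ)
      _ = 2 * δ' / δ * betModL n x σ L δ (F j) (F jJ) := by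
        rw [betModL_eq_sSup, Real.sSup_of_not_bddAbove hB, mul_zero, add_zero]

theorem stmt_7_general {k : ℕ} (Ω : Type*) [MeasurableSpace Ω]
    (J : ℕ) (hJ : 0 < J) (α : ℝ) (hα0 : 0 < α) (hα1 : α < 1)
    (F : Fin J → Set ((Fin k → ℝ) → ℝ)) (jJ : Fin J)
    (hconv : ∀ j, Convex ℝ (F j))
    (hsub : ∀ j, F j ⊆ F jJ)
    (L : ((Fin k → ℝ) → ℝ) →ₗ[ℝ] ℝ)
    (n : ℕ) (x : Fin n → (Fin k → ℝ)) (σ : (Fin k → ℝ) → ℝ)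
    (P : ((Fin k → ℝ) → ℝ) → Measure Ω)
    (hP : ∀ f ∈ F jJ, IsProbabilityMeasure (P f))
    (cl cu : Fin J → Ω → ℝ)
    (hint : ∀ j, ∀ f ∈ F jJ, Integrable (cl j) (P f) ∧ Integrable (cu j) (P f))
    (hlo : ∀ j, ∀ f ∈ F j,
      ∫ ω, (L f - cl j ω) ∂(P f)
        ≤ ordModL n x σ L (gaussQuantile (1 - α / (2 * J))) (F jJ) (F j))
    (hup : ∀ j, ∀ f ∈ F j,
      ∫ ω, (cu j ω - L f) ∂(P f)
        ≤ ordModL n x σ L (gaussQuantile (1 - α / (2 * J))) (F j) (F jJ)) :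
    ∀ j, ∀ f ∈ F j,
      ∫ ω, ((Finset.univ.inf' ⟨jJ, Finset.mem_univ jJ⟩ fun ℓ => cu ℓ ω) -
            (Finset.univ.sup' ⟨jJ, Finset.mem_univ jJ⟩ fun ℓ => cl ℓ ω)) ∂(P f)
        ≤ 2 * gaussQuantile (1 - α / (2 * J)) / gaussQuantile (1 - α / 2) *
            betModL n x σ L (gaussQuantile (1 - α / 2)) (F j) (F jJ) := by
  intro j f hf
  have hJ1 : (1 : ℝ) ≤ J := by exact_mod_cast hJ
  have hlevel : α / (2 * J) ≤ α / 2 :=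
    div_le_div_of_nonneg_left hα0.le two_pos (le_mul_of_one_le_right zero_le_two hJ1)
  have hlevel_pos : 0 < α / (2 * J) := by positivity
  exact integral_bonferroni_length_le (hconv jJ) hsub L x σ
    (gaussQuantile_pos (by linarith) (by linarith))
    (gaussQuantile_mono (by linarith) (by linarith) (by linarith)) hP hint hlo hup hf

/-- the Bonferroni confidence interval, obtained by intersecting the `J`
one-sided CIs with level `α/(2J)`, has worst-case expected length over `F_j` bounded by
`(2 z_{1−α/(2J)} / z_{1−α/2}) ω₊(z_{1−α/2}, F_j, F_J)`. -/
theorem stmt_7 {k : ℕ} (Ω : Type*) [MeasurableSpace Ω]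
    (J : ℕ) (hJ : 0 < J) (α : ℝ) (hα0 : 0 < α) (hα1 : α < 1)
    (F : Fin J → Set ((Fin k → ℝ) → ℝ)) (jJ : Fin J)
    (hne : ∀ j, (F j).Nonempty) (hconv : ∀ j, Convex ℝ (F j))
    (hsub : ∀ j, F j ⊆ F jJ)
    (L : ((Fin k → ℝ) → ℝ) →ₗ[ℝ] ℝ)
    (n : ℕ) (x : Fin n → (Fin k → ℝ)) (σ : (Fin k → ℝ) → ℝ) (hσ : ∀ y, 0 < σ y)
    (P : ((Fin k → ℝ) → ℝ) → Measure Ω)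
    (hP : ∀ f ∈ F jJ, IsProbabilityMeasure (P f))
    (cl cu : Fin J → Ω → ℝ)
    (hint : ∀ j, ∀ f ∈ F jJ, Integrable (cl j) (P f) ∧ Integrable (cu j) (P f))
    (hlo : ∀ j, ∀ f ∈ F j,
      ∫ ω, (L f - cl j ω) ∂(P f)
        ≤ ordModL n x σ L (gaussQuantile (1 - α / (2 * J))) (F jJ) (F j))
    (hup : ∀ j, ∀ f ∈ F j,
      ∫ ω, (cu j ω - L f) ∂(P f)
        ≤ ordModL n x σ L (gaussQuantile (1 - α / (2 * J))) (F j) (F jJ)) :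
    ∀ j, ∀ f ∈ F j,
      ∫ ω, ((Finset.univ.inf' ⟨jJ, Finset.mem_univ jJ⟩ fun ℓ => cu ℓ ω) -
            (Finset.univ.sup' ⟨jJ, Finset.mem_univ jJ⟩ fun ℓ => cl ℓ ω)) ∂(P f)
        ≤ 2 * gaussQuantile (1 - α / (2 * J)) / gaussQuantile (1 - α / 2) *
            betModL n x σ L (gaussQuantile (1 - α / 2)) (F j) (F jJ) :=
  stmt_7_general Ω J hJ α hα0 hα1 F jJ hconv hsub L n x σ P hP cl cu hint hlo hup
end

section
/- Let α ∈ (0,1), J ≥ 1, and τ ∈ [α/(2J), α]. Let F be a nonempty class of functions with a functional L, and let {P_f : f ∈ F} be a family of probability measures on a common measurable space. Suppose there are random variables ĉ^{ℓ,1},…,ĉ^{ℓ,J}, ĉ^{u,1},…,ĉ^{u,J} and positive constants s₁,…,s_J, t₁,…,t_J such that, under every P_f with f ∈ F, the 2J-dimensional random vector with components Ṽ_j := (ĉ^{ℓ,j} − Lf)/s_j + z_{1−τ} and W̃_j := (Lf − ĉ^{u,j})/t_j + z_{1−τ} (j = 1,…,J) is jointly Gaussian with a covariance matrix Σ that does not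 depend on f and with E_{P_f}[Ṽ_j] ≤ 0 and E_{P_f}[W̃_j] ≤ 0 for all j. Let (V, W) be a centered jointly Gaussian 2J-vector with covariance matrix Σ. If P( max{V₁,…,V_J, W₁,…,W_J} > z_{1−τ} ) ≤ α, then sup_{f∈F} P_f( Lf ∉ ∩_{j=1}^J [ĉ^{ℓ,j}, ĉ^{u,j}] ) ≤ α. -/
open MeasureTheory Filter Finset

/-- calibrated Bonferroni coverage.  If under every `P_f` the vector of
standardized endpoint statistics `(Ṽ, W̃)` is distributed as a fixed centered Gaussian
vector `(V, W)` (with covariance matrix not depending on `f`) shifted by a componentwise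
nonpositive mean vector, and if `P(max{V₁,…,V_J,W₁,…,W_J} > z_{1−τ}) ≤ α`, then the
intersected CI `∩_j [ĉ^{ℓ,j}, ĉ^{u,j}]` has non-coverage probability at most `α`
uniformly over the class. -/
theorem stmt_9 (Ω Ω' : Type*) [MeasurableSpace Ω] [MeasurableSpace Ω']
    (ι : Type*) (Fc : Set ι) (L : ι → ℝ)
    (P : ι → Measure Ω) (hP : ∀ f ∈ Fc, IsProbabilityMeasure (P f))
    (J : ℕ) (hJ : 0 < J) (α τ : ℝ) (hα0 : 0 < α) (hα1 : α < 1)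
    (hτl : α / (2 * J) ≤ τ) (hτu : τ ≤ α)
    (cl cu : Fin J → Ω → ℝ) (s t : Fin J → ℝ)
    (hs : ∀ j, 0 < s j) (ht : ∀ j, 0 < t j)
    (Q : Measure Ω') [IsProbabilityMeasure Q]
    (V W : Fin J → Ω' → ℝ)
    (hmeas : ∀ j, Measurable (V j) ∧ Measurable (W j))
    (hcent : ∀ j, (∫ ω', V j ω' ∂Q) = 0 ∧ (∫ ω', W j ω' ∂Q) = 0)
    (hGauss : ∀ f ∈ Fc, ∃ mV mW : Fin J → ℝ,
      (∀ j, mV j ≤ 0) ∧ (∀ j, mW j ≤ 0) ∧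
      Measure.map (fun ω => (fun j => (cl j ω - L f) / s j + gaussQuantile (1 - τ),
                             fun j => (L f - cu j ω) / t j + gaussQuantile (1 - τ))) (P f)
        = Measure.map (fun ω' => (fun j => mV j + V j ω',
                                  fun j => mW j + W j ω')) Q)
    (hmax : Q {ω' | ∃ j, gaussQuantile (1 - τ) < V j ω' ∨ gaussQuantile (1 - τ) < W j ω'}
        ≤ ENNReal.ofReal α) :
    ∀ f ∈ Fc,
      P f {ω | ∃ j, L f < cl j ω ∨ cu j ω < L f} ≤ ENNReal.ofReal α := by
  intro f hf
  obtain ⟨mV, mW, hmV, hmW, hmap⟩ := hGauss f hf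
  set z := gaussQuantile (1 - τ) with hz
  set g : Ω → (Fin J → ℝ) × (Fin J → ℝ) :=
    fun ω => (fun j => (cl j ω - L f) / s j + z, fun j => (L f - cu j ω) / t j + z) with hg
  set h : Ω' → (Fin J → ℝ) × (Fin J → ℝ) :=
    fun ω' => (fun j => mV j + V j ω', fun j => mW j + W j ω') with hh
  have hhm : Measurable h := by
    refine Measurable.prod ?_ ?_
    · exact measurable_pi_lambda _ fun j => measurable_const.add (hmeas j).1
    · exact measurable_pi_lambda _ fun j => measurable_const.add (hmeas j).2
  have hmapQ : IsProbabilityMeasure (Measure.map h Q) :=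
    Measure.isProbabilityMeasure_map hhm.aemeasurable
  have hgm : AEMeasurable g (P f) := by
    by_contra hng
    rw [Measure.map_of_not_aemeasurable hng] at hmap
    have h1 : (Measure.map h Q) Set.univ = 1 := measure_univ
    rw [← hmap] at h1
    simp at h1
  set S : Set ((Fin J → ℝ) × (Fin J → ℝ)) := {p | ∃ j, z < p.1 j ∨ z < p.2 j} with hS
  have hSm : MeasurableSet S := by
    have : S = ⋃ j, ({p : (Fin J → ℝ) × (Fin J → ℝ) | z < p.1 j} ∪ {p | z < p.2 j}) := by
      ext p; simp [hS]
    rw [this]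
    refine MeasurableSet.iUnion fun j => MeasurableSet.union ?_ ?_
    · exact measurableSet_lt measurable_const measurable_fst.eval
    · exact measurableSet_lt measurable_const measurable_snd.eval
  have key : ∀ (sc x y : ℝ), 0 < sc → (z < (x - y) / sc + z ↔ y < x) := by
    intro sc x y hsc
    rw [lt_add_iff_pos_left, lt_div_iff₀ hsc, zero_mul, sub_pos]
  have hEq : P f {ω | ∃ j, L f < cl j ω ∨ cu j ω < L f} = Measure.map g (P f) S := by
    rw [Measure.map_apply_of_aemeasurable hgm hSm]
    congr 1
    ext ω
    simp only [Set.mem_setOf_eq, Set.mem_preimage, hS, hg]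
    exact exists_congr fun j => or_congr (key _ _ _ (hs j)).symm (key _ _ _ (ht j)).symm
  rw [hEq, hmap, Measure.map_apply hhm hSm]
  have hsub : h ⁻¹' S ⊆ {ω' | ∃ j, z < V j ω' ∨ z < W j ω'} := by
    rintro ω' ⟨j, hj⟩
    simp only [hh] at hj
    refine ⟨j, hj.imp (fun hlt => lt_of_lt_of_le hlt ?_) (fun hlt => lt_of_lt_of_le hlt ?_)⟩
    · linarith [hmV j]
    · linarith [hmW j]
  exact (measure_mono hsub).trans hmax
end

section
/- Suppose the norm ‖·‖ on ℝ^k satisfies Assumption 1, 0 < γ₂ ≤ γ₁ ≤ 1, C₁, C₂ > 0; set k₊ := |V| and r := 1/(2 + k₊/γ₁ + (k − k₊)/γ₂). Let (X_i)_{i≥1} be i.i.d. ℝ^k-valued random vectors whose common law has a Lebesgue density p_X continuous at 0 with p_X(0) > 0, and with 0 an interior point of its support. For b > 0 set b_n := b·n^{−r}. Then, for every b > 0, almost surely lim_{n→∞} b_n^{−1} · min_{1≤i≤n} { C₁‖(X_i)_{V+}‖^{γ₁} + C₂‖(X_i)_{V−}‖^{γ₂} } = 0. -/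
open MeasureTheory Filter Finset

/-!
Write `vcost x = C₁ ‖x_{V+}‖^{γ₁} + C₂ ‖x_{V−}‖^{γ₂}` and `s = k₊/γ₁ + (k - k₊)/γ₂`. For small
`δ`, Assumption 1 gives `vcost ≤ δ` on a box `[0, e₁ δ^{1/γ₁}]^V × [0, e δ^{1/γ₂}]^{Vᶜ}` (using
`δ^{1/γ₂} ≤ δ^{1/γ₁}`, as `γ₂ ≤ γ₁`), on which the density exceeds `p 0 / 2`; so
`P (vcost X ≤ δ) ≥ c δ^s`. With `δₙ = ε b n^{-r}` this gives
`P (min_{i<n} vcost Xᵢ > δₙ) ≤ exp (-c (ε b)^s n^{1 - r s})`, which is summable because `r s < 1`.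
Borel–Cantelli, applied for each `ε = 1/(m+1)`, yields the almost sure limit.
-/

open Topology

namespace MonNorm

variable {k : ℕ} (Nm : MonNorm k)

lemma nonneg_s13 (x : Fin k → ℝ) : 0 ≤ Nm.N x := by
  have h := Nm.add_le x (-x)
  rw [add_neg_cancel, (Nm.eq_zero_iff 0).2 rfl, ← neg_one_smul ℝ x, Nm.smul_eq] at h
  norm_num at h
  linarith

lemma le_mul_of_abs_le {x : Fin k → ℝ} {M : ℝ} (hM : 0 ≤ M) (h : ∀ j, |x j| ≤ M) :
    Nm.N x ≤ M * Nm.N (fun _ => 1) := by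
  have hx := Nm.mono x (M • fun _ => 1) fun j => by simpa [abs_of_nonneg hM] using h j
  rwa [Nm.smul_eq, abs_of_nonneg hM] at hx

lemma lipschitzWith : LipschitzWith (Nm.N fun _ => 1).toNNReal Nm.N := by
  refine LipschitzWith.of_le_add_mul' _ fun x y => ?_
  have hxy : Nm.N (x - y) ≤ dist x y * Nm.N (fun _ => 1) :=
    Nm.le_mul_of_abs_le dist_nonneg fun j => by
      simpa [Real.dist_eq] using dist_le_pi_dist x y j
  have := Nm.add_le (x - y) y
  rw [sub_add_cancel] at this
  linarith

lemma continuous : Continuous Nm.N := Nm.lipschitzWith.continuous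

end MonNorm

section Parts

variable {k : ℕ} (V : Finset (Fin k))

lemma continuous_vplus : Continuous (vplus V) :=
  continuous_pi fun j => by
    unfold vplus
    split_ifs
    · exact (continuous_apply j).max continuous_const
    · exact continuous_apply j

lemma vplus_of_nonneg {x : Fin k → ℝ} (hx : 0 ≤ x) : vplus V x = x :=
  funext fun j => by
    unfold vplus
    split_ifs
    · exact max_eq_left (hx j)
    · rfl

lemma abs_vminus_le_of_nonneg {x : Fin k → ℝ} {t : ℝ} (hx : 0 ≤ x) (ht : 0 ≤ t)
    (hxt : ∀ j ∉ V, x j ≤ t) (j : Fin k) : |vminus V x j| ≤ t := by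
  by_cases hj : j ∈ V
  · simpa [vminus, vplus, hj, max_eq_right (neg_nonpos.2 (hx j))] using ht
  · simpa [vminus, vplus, hj, abs_of_nonneg (hx j)] using hxt j hj

end Parts

noncomputable def vcost {k : ℕ} (V : Finset (Fin k)) (Nm : MonNorm k) (γ₁ γ₂ C₁ C₂ : ℝ)
    (x : Fin k → ℝ) : ℝ :=
  C₁ * Nm.N (vplus V x) ^ γ₁ + C₂ * Nm.N (vminus V x) ^ γ₂

section Cost

variable {k : ℕ} (V : Finset (Fin k)) (Nm : MonNorm k) {γ₁ γ₂ C₁ C₂ : ℝ}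

lemma vcost_nonneg (hC₁ : 0 ≤ C₁) (hC₂ : 0 ≤ C₂) (x : Fin k → ℝ) :
    0 ≤ vcost V Nm γ₁ γ₂ C₁ C₂ x :=
  add_nonneg (mul_nonneg hC₁ (Real.rpow_nonneg (Nm.nonneg_s13 _) _))
    (mul_nonneg hC₂ (Real.rpow_nonneg (Nm.nonneg_s13 _) _))

lemma continuous_vcost (hγ₁ : 0 ≤ γ₁) (hγ₂ : 0 ≤ γ₂) :
    Continuous (vcost V Nm γ₁ γ₂ C₁ C₂) := by
  have hplus := Nm.continuous.comp (continuous_vplus V)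
  have hminus := hplus.comp continuous_neg
  exact (continuous_const.mul (hplus.rpow_const fun _ => Or.inr hγ₁)).add
    (continuous_const.mul (hminus.rpow_const fun _ => Or.inr hγ₂))

lemma vcost_le_of_mem_Icc (hγ₁ : 0 ≤ γ₁) (hγ₂ : 0 ≤ γ₂) (hC₁ : 0 ≤ C₁) (hC₂ : 0 ≤ C₂)
    {t t₁ t₂ L δ : ℝ} (hL : Nm.N (fun _ => 1) ≤ L) (ht : 0 ≤ t) (ht₁ : t ≤ t₁) (ht₂ : t ≤ t₂)
    (h₁ : C₁ * (t₁ * L) ^ γ₁ ≤ δ / 2) (h₂ : C₂ * (t₂ * L) ^ γ₂ ≤ δ / 2) {x : Fin k → ℝ}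
    (hx : x ∈ Set.Icc 0 fun j => if j ∈ V then t₁ else t) :
    vcost V Nm γ₁ γ₂ C₁ C₂ x ≤ δ := by
  obtain ⟨hx0, hxt⟩ := hx
  have hplus : Nm.N (vplus V x) ≤ t₁ * L := by
    rw [vplus_of_nonneg V hx0]
    refine (Nm.le_mul_of_abs_le (ht.trans ht₁) fun j => ?_).trans
      (mul_le_mul_of_nonneg_left hL (ht.trans ht₁))
    rw [abs_of_nonneg (hx0 j)]
    refine (hxt j).trans ?_
    show (if j ∈ V then t₁ else t) ≤ t₁
    split_ifs
    exacts [le_rfl, ht₁]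
  have hminus : Nm.N (vminus V x) ≤ t₂ * L := by
    refine (Nm.le_mul_of_abs_le ht (abs_vminus_le_of_nonneg V hx0 ht fun j hj => ?_)).trans ?_
    · simpa [hj] using hxt j
    · exact mul_le_mul ht₂ hL (Nm.nonneg_s13 _) (ht.trans ht₂)
  have hplus' : C₁ * Nm.N (vplus V x) ^ γ₁ ≤ C₁ * (t₁ * L) ^ γ₁ := by
    gcongr
    exact Nm.nonneg_s13 _
  have hminus' : C₂ * Nm.N (vminus V x) ^ γ₂ ≤ C₂ * (t₂ * L) ^ γ₂ := by
    gcongr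
    exact Nm.nonneg_s13 _
  unfold vcost
  linarith

end Cost

lemma volume_Icc_zero_ite {k : ℕ} (V : Finset (Fin k)) {a b : ℝ} (ha : 0 ≤ a) (hb : 0 ≤ b) :
    volume (Set.Icc (0 : Fin k → ℝ) fun j => if j ∈ V then a else b) =
      ENNReal.ofReal (a ^ V.card * b ^ (k - V.card)) := by
  rw [Real.volume_Icc_pi, ← ENNReal.ofReal_prod_of_nonneg fun j _ => by
    simp only [Pi.zero_apply, sub_zero]; split_ifs <;> assumption]
  simp [prod_ite, filter_not, ← compl_eq_univ_sdiff, card_compl]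

lemma exists_ball_ofReal_mul_le_withDensity {E : Type*} [PseudoMetricSpace E]
    [MeasurableSpace E] (μ : Measure E) {p : E → ℝ} {x₀ : E} (hp : ContinuousAt p x₀)
    (hp0 : 0 < p x₀) :
    ∃ ρ > 0, ∀ s ⊆ Metric.ball x₀ ρ, MeasurableSet s →
      ENNReal.ofReal (p x₀ / 2) * μ s ≤ μ.withDensity (fun y => ENNReal.ofReal (p y)) s := by
  obtain ⟨ρ, hρ, hball⟩ := Metric.eventually_nhds_iff_ball.1
    (hp.eventually (lt_mem_nhds (half_lt_self hp0)))
  refine ⟨ρ, hρ, fun s hs hsm => ?_⟩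
  rw [withDensity_apply _ hsm, ← setLIntegral_const]
  exact setLIntegral_mono' hsm fun y hy => ENNReal.ofReal_le_ofReal (hball y (hs hy)).le

lemma mul_rpow_eq_half {C γ δ : ℝ} (hC : 0 < C) (hγ : 0 < γ) (hδ : 0 ≤ δ) :
    C * (δ ^ γ⁻¹ * (2 * C) ^ (-γ⁻¹)) ^ γ = δ / 2 := by
  rw [Real.mul_rpow (by positivity) (by positivity), ← Real.rpow_mul hδ,
    ← Real.rpow_mul (by positivity), inv_mul_cancel₀ hγ.ne', neg_mul, inv_mul_cancel₀ hγ.ne',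
    Real.rpow_one, Real.rpow_neg_one]
  field_simp

lemma rpow_card_div_add_eq {k m : ℕ} (hm : m ≤ k) {δ : ℝ} (hδ : 0 < δ) (γ₁ γ₂ : ℝ) :
    δ ^ ((m : ℝ) / γ₁ + ((k : ℝ) - m) / γ₂) = (δ ^ γ₁⁻¹) ^ m * (δ ^ γ₂⁻¹) ^ (k - m) := by
  rw [Real.rpow_add hδ, ← Real.rpow_mul_natCast hδ.le, ← Real.rpow_mul_natCast hδ.le,
    Nat.cast_sub hm, div_eq_inv_mul, div_eq_inv_mul, mul_comm γ₁⁻¹, mul_comm γ₂⁻¹]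

theorem exists_ofReal_mul_rpow_le_withDensity_vcost_le {k : ℕ} (V : Finset (Fin k))
    (Nm : MonNorm k) {γ₁ γ₂ C₁ C₂ : ℝ} (hγ₂ : 0 < γ₂) (hγ : γ₂ ≤ γ₁) (hC₁ : 0 < C₁)
    (hC₂ : 0 < C₂) {p : (Fin k → ℝ) → ℝ} (hpcont : ContinuousAt p 0) (hp0 : 0 < p 0) :
    ∃ c > 0, ∀ᶠ δ in 𝓝[>] 0,
      ENNReal.ofReal (c * δ ^ ((V.card : ℝ) / γ₁ + ((k : ℝ) - V.card) / γ₂)) ≤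
        volume.withDensity (fun y => ENNReal.ofReal (p y))
          {x | vcost V Nm γ₁ γ₂ C₁ C₂ x ≤ δ} := by
  have hγ₁ : 0 < γ₁ := hγ₂.trans_le hγ
  obtain ⟨ρ, hρ, hball⟩ := exists_ball_ofReal_mul_le_withDensity volume hpcont hp0
  set L := Nm.N (fun _ => 1) + 1
  have hL0 : 0 < L := by linarith [Nm.nonneg_s13 fun _ => 1]
  set e₁ := (2 * C₁) ^ (-γ₁⁻¹) / L
  set e := min e₁ ((2 * C₂) ^ (-γ₂⁻¹) / L)
  have he₁0 : 0 < e₁ := by positivity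
  have he0 : 0 < e := lt_min he₁0 (by positivity)
  refine ⟨p 0 / 2 * (e₁ ^ V.card * e ^ (k - V.card)), by positivity, ?_⟩
  have hsmall : ∀ᶠ δ in 𝓝[>] (0 : ℝ), δ ≤ 1 ∧ δ ^ γ₁⁻¹ * e₁ < ρ := by
    have hcont : Tendsto (fun δ : ℝ => δ ^ γ₁⁻¹ * e₁) (𝓝 0) (𝓝 0) := by
      simpa [Real.zero_rpow (inv_ne_zero hγ₁.ne')] using
        ((Real.continuous_rpow_const (inv_nonneg.2 hγ₁.le)).tendsto 0).mul_const e₁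
    exact nhdsWithin_le_nhds
      ((eventually_le_nhds one_pos).and (hcont.eventually (gt_mem_nhds hρ)))
  filter_upwards [self_mem_nhdsWithin, hsmall] with δ (hδ : 0 < δ) ⟨hδ1, hδρ⟩
  set t₁ := δ ^ γ₁⁻¹ * e₁ with ht₁
  set t := δ ^ γ₂⁻¹ * e with ht
  have ht0 : 0 < t := by positivity
  have htt₁ : t ≤ t₁ :=
    mul_le_mul (Real.rpow_le_rpow_of_exponent_ge hδ hδ1 (inv_anti₀ hγ₂ hγ)) (min_le_left _ _)
      he0.le (by positivity)
  set box : Set (Fin k → ℝ) := Set.Icc 0 fun j => if j ∈ V then t₁ else t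
  have hbox_ball : box ⊆ Metric.ball 0 ρ := by
    intro x ⟨hx0, hxt⟩
    refine lt_of_le_of_lt ((dist_pi_le_iff (ht0.le.trans htt₁)).2 fun j => ?_) hδρ
    have hxj : x j ≤ if j ∈ V then t₁ else t := hxt j
    rw [Pi.zero_apply, Real.dist_eq, sub_zero, abs_of_nonneg (hx0 j)]
    split_ifs at hxj
    exacts [hxj, hxj.trans htt₁]
  have hbox_sub : box ⊆ {x | vcost V Nm γ₁ γ₂ C₁ C₂ x ≤ δ} := fun x hx =>
    vcost_le_of_mem_Icc V Nm hγ₁.le hγ₂.le hC₁.le hC₂.le (le_add_of_nonneg_right zero_le_one)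
      ht0.le htt₁ (mul_le_mul_of_nonneg_left (min_le_right _ _) (by positivity))
      (by rw [mul_assoc, div_mul_cancel₀ _ hL0.ne', mul_rpow_eq_half hC₁ hγ₁ hδ.le])
      (by rw [mul_assoc, div_mul_cancel₀ _ hL0.ne', mul_rpow_eq_half hC₂ hγ₂ hδ.le]) hx
  calc ENNReal.ofReal (p 0 / 2 * (e₁ ^ V.card * e ^ (k - V.card)) *
        δ ^ ((V.card : ℝ) / γ₁ + ((k : ℝ) - V.card) / γ₂))
      = ENNReal.ofReal (p 0 / 2) * volume box := by
        rw [volume_Icc_zero_ite V (by positivity) ht0.le, ← ENNReal.ofReal_mul (by positivity),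
          rpow_card_div_add_eq (card_le_univ V |>.trans_eq (Fintype.card_fin k)) hδ, ht₁, ht,
          mul_pow, mul_pow]
        ring_nf
    _ ≤ _ := hball box hbox_ball measurableSet_Icc
    _ ≤ _ := measure_mono hbox_sub

lemma summable_exp_neg_mul_rpow {c a : ℝ} (hc : 0 < c) (ha : 0 < a) :
    Summable fun n : ℕ => Real.exp (-(c * (n : ℝ) ^ a)) := by
  have hpow : Tendsto (fun n : ℕ => (n : ℝ) ^ a) atTop atTop :=
    (tendsto_rpow_atTop ha).comp tendsto_natCast_atTop_atTop
  have hlittle := (isLittleO_exp_neg_mul_rpow_atTop hc (-2 / a)).comp_tendsto hpow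
  refine summable_of_isBigO_nat (Real.summable_nat_rpow.2 (by norm_num : (-2 : ℝ) < -1))
    (hlittle.isBigO.congr (fun n => by simp) fun n => ?_)
  rw [Function.comp_apply, ← Real.rpow_mul (Nat.cast_nonneg n), mul_div_cancel₀ _ ha.ne']

lemma tsum_ne_top_of_eventually_le_ofReal {f : ℕ → ENNReal} {g : ℕ → ℝ} (hf : ∀ n, f n ≠ ⊤)
    (hg : Summable g) (hg0 : ∀ n, 0 ≤ g n) (hfg : ∀ᶠ n in atTop, f n ≤ ENNReal.ofReal (g n)) :
    ∑' n, f n ≠ ⊤ := by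
  rw [← funext fun n => ENNReal.coe_toNNReal (hf n), ENNReal.tsum_coe_ne_top_iff_summable,
    ← NNReal.summable_coe]
  refine hg.of_norm_bounded_eventually_nat (hfg.mono fun n hn => ?_)
  rw [Real.norm_of_nonneg (NNReal.coe_nonneg _)]
  exact ENNReal.toReal_le_of_le_ofReal (hg0 n) hn

lemma compl_pow_le_ofReal_exp {E : Type*} [MeasurableSpace E] {μ : Measure E}
    [IsProbabilityMeasure μ] {s : Set E} (hs : MeasurableSet s) {q : ℝ} (hq : 0 ≤ q)
    (hqs : ENNReal.ofReal q ≤ μ s) (n : ℕ) :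
    μ sᶜ ^ n ≤ ENNReal.ofReal (Real.exp (-(n * q))) := by
  have hcompl : μ sᶜ ≤ ENNReal.ofReal (Real.exp (-q)) := by
    rw [prob_compl_eq_one_sub hs]
    calc 1 - μ s ≤ 1 - ENNReal.ofReal q := tsub_le_tsub_left hqs 1
      _ = ENNReal.ofReal (1 - q) := by rw [← ENNReal.ofReal_one, ENNReal.ofReal_sub _ hq]
      _ ≤ ENNReal.ofReal (Real.exp (-q)) := by
        gcongr
        linarith [Real.add_one_le_exp (-q)]
  calc μ sᶜ ^ n ≤ ENNReal.ofReal (Real.exp (-q)) ^ n := by gcongr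
    _ = ENNReal.ofReal (Real.exp (-(n * q))) := by
      rw [← ENNReal.ofReal_pow (Real.exp_nonneg _), ← Real.exp_nat_mul, mul_neg]

section IID

variable {Ω E : Type*} [MeasurableSpace Ω] [MeasurableSpace E] {P : Measure Ω} {μ : Measure E}
  {X : ℕ → Ω → E}

lemma measure_forall_lt_mem_eq_pow (hX : ∀ i, Measurable (X i))
    (hiid : ProbabilityTheory.iIndepFun X P) (hlaw : ∀ i, P.map (X i) = μ) {s : Set E}
    (hs : MeasurableSet s) (n : ℕ) :
    P {ω | ∀ i < n, X i ω ∈ s} = μ s ^ n := by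
  have hinter : {ω | ∀ i < n, X i ω ∈ s} = ⋂ i ∈ Finset.range n, X i ⁻¹' s := by
    ext ω
    simp
  rw [hinter, hiid.measure_inter_preimage_eq_mul _ fun _ _ => hs,
    Finset.prod_congr rfl fun i _ => by rw [← Measure.map_apply (hX i) hs, hlaw i],
    Finset.prod_const, Finset.card_range]

lemma ae_eventually_exists_lt_mem (hX : ∀ i, Measurable (X i))
    (hiid : ProbabilityTheory.iIndepFun X P) (hlaw : ∀ i, P.map (X i) = μ) {s : ℕ → Set E}
    (hs : ∀ n, MeasurableSet (s n)) (hsum : ∑' n, μ (s n)ᶜ ^ n ≠ ⊤) :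
    ∀ᵐ ω ∂P, ∀ᶠ n in atTop, ∃ i < n, X i ω ∈ s n := by
  simp_rw [← measure_forall_lt_mem_eq_pow hX hiid hlaw (hs _).compl] at hsum
  filter_upwards [ae_eventually_notMem hsum] with ω hω
  filter_upwards [hω] with n hn
  simpa using hn

theorem ae_eventually_exists_le_mul_rpow_neg [IsProbabilityMeasure μ]
    (hX : ∀ i, Measurable (X i)) (hiid : ProbabilityTheory.iIndepFun X P)
    (hlaw : ∀ i, P.map (X i) = μ) {g : E → ℝ} (hg : Measurable g) {c s r : ℝ} (hc : 0 < c)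
    (hr : 0 < r) (hrs : r * s < 1)
    (hball : ∀ᶠ δ in 𝓝[>] 0, ENNReal.ofReal (c * δ ^ s) ≤ μ {x | g x ≤ δ}) {b : ℝ}
    (hb : 0 < b) :
    ∀ᵐ ω ∂P, ∀ᶠ n in atTop, ∃ i < n, g (X i ω) ≤ b * (n : ℝ) ^ (-r) := by
  have hδ : Tendsto (fun n : ℕ => b * (n : ℝ) ^ (-r)) atTop (𝓝[>] 0) := by
    refine tendsto_nhdsWithin_iff.2 ⟨?_, (eventually_ge_atTop 1).mono fun n hn => ?_⟩
    · simpa using ((tendsto_rpow_neg_atTop hr).comp tendsto_natCast_atTop_atTop).const_mul b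
    · have : (0 : ℝ) < n := by exact_mod_cast hn
      exact mul_pos hb (Real.rpow_pos_of_pos this _)
  refine ae_eventually_exists_lt_mem hX hiid hlaw (fun n => hg measurableSet_Iic) ?_
  refine tsum_ne_top_of_eventually_le_ofReal (fun n => by simp)
    (summable_exp_neg_mul_rpow (mul_pos hc (Real.rpow_pos_of_pos hb s)) (sub_pos.2 hrs))
    (fun n => (Real.exp_pos _).le) ?_
  filter_upwards [hδ.eventually hball, eventually_ge_atTop 1] with n hn hn1
  have hn0 : (0 : ℝ) < n := by exact_mod_cast hn1
  refine (compl_pow_le_ofReal_exp (hg measurableSet_Iic) (by positivity) hn n).trans_eq ?_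
  rw [Real.mul_rpow hb.le (Real.rpow_nonneg hn0.le _), ← Real.rpow_mul hn0.le,
    Real.rpow_sub hn0, Real.rpow_one, div_eq_mul_inv, ← Real.rpow_neg hn0.le, neg_mul]
  ring_nf

end IID

lemma ae_tendsto_zero_of_forall_eventually_le {Ω : Type*} [MeasurableSpace Ω] {P : Measure Ω}
    {u : ℕ → Ω → ℝ} (hu : ∀ n ω, 0 ≤ u n ω) (h : ∀ ε > 0, ∀ᵐ ω ∂P, ∀ᶠ n in atTop, u n ω ≤ ε) :
    ∀ᵐ ω ∂P, Tendsto (fun n => u n ω) atTop (𝓝 0) := by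
  filter_upwards [ae_all_iff.2 fun m : ℕ => h (1 / (m + 1)) (by positivity)] with ω hω
  refine tendsto_order.2 ⟨fun a ha => .of_forall fun n => ha.trans_le (hu n ω), fun ε hε => ?_⟩
  obtain ⟨m, hm⟩ := exists_nat_one_div_lt hε
  exact (hω m).mono fun n hn => hn.trans_lt hm

lemma inv_mul_sInf_le_of_exists_le {a ε : ℝ} (ha : 0 < a) {g : ℕ → ℝ} (hg : ∀ i, 0 ≤ g i) {n : ℕ}
    (h : ∃ i < n, g i ≤ ε * a) :
    a⁻¹ * sInf {v : ℝ | ∃ i < n, v = g i} ≤ ε := by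
  obtain ⟨i, hi, hle⟩ := h
  have hbdd : BddBelow {v : ℝ | ∃ i < n, v = g i} := ⟨0, by rintro _ ⟨j, -, rfl⟩; exact hg j⟩
  rw [inv_mul_le_iff₀ ha, mul_comm]
  exact (csInf_le hbdd ⟨i, hi, rfl⟩).trans hle

theorem stmt_13_general {k : ℕ} (V : Finset (Fin k)) (Nm : MonNorm k)
    (γ₁ γ₂ C₁ C₂ : ℝ)
    (hγ₂0 : 0 < γ₂) (hγ : γ₂ ≤ γ₁)
    (hC₁ : 0 < C₁) (hC₂ : 0 < C₂)
    (Ω : Type*) [MeasurableSpace Ω] (P : Measure Ω) [IsProbabilityMeasure P]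
    (X : ℕ → Ω → (Fin k → ℝ)) (hXmeas : ∀ i, Measurable (X i))
    (hiid : ProbabilityTheory.iIndepFun X P)
    (p : (Fin k → ℝ) → ℝ)
    (hlaw : ∀ i, Measure.map (X i) P = volume.withDensity (fun y => ENNReal.ofReal (p y)))
    (hpcont : ContinuousAt p 0) (hp0 : 0 < p 0) :
    ∀ b : ℝ, 0 < b →
      ∀ᵐ ω ∂P,
        Tendsto (fun n : ℕ =>
            (b * (n : ℝ) ^ (-(1 / (2 + (V.card : ℝ) / γ₁ + ((k : ℝ) - V.card) / γ₂))))⁻¹ *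
              sInf {v : ℝ | ∃ i < n,
                v = C₁ * Nm.N (vplus V (X i ω)) ^ γ₁ + C₂ * Nm.N (vminus V (X i ω)) ^ γ₂})
          atTop (nhds 0) := by
  intro b hb
  have hγ₁ : 0 < γ₁ := hγ₂0.trans_le hγ
  have hden : 0 < 2 + (V.card : ℝ) / γ₁ + ((k : ℝ) - V.card) / γ₂ := by
    have hV : (V.card : ℝ) ≤ k := by
      exact_mod_cast (card_le_univ V).trans_eq (Fintype.card_fin k)
    have : 0 ≤ ((k : ℝ) - V.card) / γ₂ := div_nonneg (sub_nonneg.2 hV) hγ₂0.le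
    have : 0 ≤ (V.card : ℝ) / γ₁ := by positivity
    linarith
  have hr := one_div_pos.2 hden
  have hrs : 1 / (2 + (V.card : ℝ) / γ₁ + ((k : ℝ) - V.card) / γ₂) *
      ((V.card : ℝ) / γ₁ + ((k : ℝ) - V.card) / γ₂) < 1 := by
    rw [one_div_mul_eq_div, div_lt_one hden]
    linarith
  have : IsProbabilityMeasure (volume.withDensity fun y => ENNReal.ofReal (p y)) :=
    hlaw 0 ▸ Measure.isProbabilityMeasure_map (hXmeas 0).aemeasurable
  obtain ⟨c, hc, hball⟩ :=
    exists_ofReal_mul_rpow_le_withDensity_vcost_le V Nm hγ₂0 hγ hC₁ hC₂ hpcont hp0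
  have hcost := vcost_nonneg V Nm (γ₁ := γ₁) (γ₂ := γ₂) hC₁.le hC₂.le
  refine ae_tendsto_zero_of_forall_eventually_le
    (fun n ω => mul_nonneg (by positivity) (Real.sInf_nonneg ?_)) fun ε hε => ?_
  · rintro _ ⟨i, -, rfl⟩
    exact hcost (X i ω)
  filter_upwards [ae_eventually_exists_le_mul_rpow_neg hXmeas hiid hlaw
    ((continuous_vcost V Nm hγ₁.le hγ₂0.le).measurable) hc hr hrs hball (mul_pos hε hb)]
    with ω hω
  filter_upwards [hω, eventually_ge_atTop 1] with n hn hn1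
  refine inv_mul_sInf_le_of_exists_le (by positivity) (fun i => hcost (X i ω)) ?_
  simpa only [mul_assoc] using hn

/-- `b_n⁻¹ · min_{1≤i≤n} { C₁‖(X_i)_{V+}‖^{γ₁} + C₂‖(X_i)_{V−}‖^{γ₂} } → 0`
almost surely, where `b_n = b n^{−r}` and `r = 1/(2 + k₊/γ₁ + (k−k₊)/γ₂)`. -/
theorem stmt_13 {k : ℕ} (V : Finset (Fin k)) (Nm : MonNorm k)
    (γ₁ γ₂ C₁ C₂ : ℝ)
    (hγ₂0 : 0 < γ₂) (hγ : γ₂ ≤ γ₁) (hγ₁1 : γ₁ ≤ 1)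
    (hC₁ : 0 < C₁) (hC₂ : 0 < C₂)
    (Ω : Type*) [MeasurableSpace Ω] (P : Measure Ω) [IsProbabilityMeasure P]
    (X : ℕ → Ω → (Fin k → ℝ)) (hXmeas : ∀ i, Measurable (X i))
    (hiid : ProbabilityTheory.iIndepFun X P)
    (p : (Fin k → ℝ) → ℝ)
    (hlaw : ∀ i, Measure.map (X i) P = volume.withDensity (fun y => ENNReal.ofReal (p y)))
    (hpcont : ContinuousAt p 0) (hp0 : 0 < p 0)
    (hsupp : (0 : Fin k → ℝ) ∈ interior (Function.support p)) :
    ∀ b : ℝ, 0 < b →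
      ∀ᵐ ω ∂P,
        Tendsto (fun n : ℕ =>
            (b * (n : ℝ) ^ (-(1 / (2 + (V.card : ℝ) / γ₁ + ((k : ℝ) - V.card) / γ₂))))⁻¹ *
              sInf {v : ℝ | ∃ i < n,
                v = C₁ * Nm.N (vplus V (X i ω)) ^ γ₁ + C₂ * Nm.N (vminus V (X i ω)) ^ γ₂})
          atTop (nhds 0) :=
  stmt_13_general V Nm γ₁ γ₂ C₁ C₂ hγ₂0 hγ hC₁ hC₂ Ω P X hXmeas hiid p hlaw hpcont hp0
end
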